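/- arXiv:1706.04869 — 5 statements merged into one kernel-verified Lean document; each statement's English description precedes it below -/
import Mathlib

section
/- Let E be a real Hilbert space and H : E → E a bounded self-adjoint operator which is semibounded, i.e. there is c ∈ ℝ with ⟨Hv, v⟩ ≥ c‖v‖² for all v ∈ E. Define the form norm ‖v‖_q² := ⟨Hv, v⟩ + (1 − c)‖v‖². If λ ∈ ℝ belongs to the spectrum of H, then there exists a sequence (w_n) in E with ‖w_n‖ → 1 such that sup { |⟨H w_n, v⟩ − λ⟨w_n, v⟩| : v ∈ E, ‖v‖_q ≤ 1 } → 0 as n → ∞. -/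
open Filter Topology InnerProductSpace

/-- Weyl-type criterion, direction (i) ⇒ (ii): if `λ` is in the spectrum of a bounded
self-adjoint semibounded operator `H` on a real Hilbert space, then there is a sequence
`(w n)` with `‖w n‖ → 1` such that `sup { |⟨H wₙ, v⟩ - λ⟨wₙ, v⟩| : ‖v‖_q ≤ 1 } → 0`,
where `‖v‖_q² = ⟨H v, v⟩ + (1 - c)‖v‖²`. -/
theorem shnol_weyl_forward {E : Type*} [NormedAddCommGroup E] [InnerProductSpace ℝ E]
    [CompleteSpace E] (H : E →L[ℝ] E)
    (hsa : ∀ u v : E, ⟪H u, v⟫_ℝ = ⟪u, H v⟫_ℝ)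
    (c : ℝ) (hsb : ∀ v : E, c * ‖v‖ ^ 2 ≤ ⟪H v, v⟫_ℝ)
    (lam : ℝ) (hlam : lam ∈ spectrum ℝ H) :
    ∃ w : ℕ → E, Tendsto (fun n => ‖w n‖) atTop (𝓝 1) ∧
      ∀ ε > 0, ∀ᶠ n in atTop, ∀ v : E,
        ⟪H v, v⟫_ℝ + (1 - c) * ‖v‖ ^ 2 ≤ 1 →
        |⟪H (w n), v⟫_ℝ - lam * ⟪w n, v⟫_ℝ| ≤ ε := by
  set T : E →L[ℝ] E := algebraMap ℝ (E →L[ℝ] E) lam - H with hT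
  have hTapp : ∀ u, T u = lam • u - H u := fun u => by
    simp [hT, Algebra.algebraMap_eq_smul_one]
  have hTsym : ∀ u v : E, ⟪T u, v⟫_ℝ = ⟪u, T v⟫_ℝ := by
    intro u v
    simp [hTapp, inner_sub_left, inner_sub_right, inner_smul_left, inner_smul_right, hsa]
  have hTnu : ¬ IsUnit T := by
    rw [spectrum.mem_iff] at hlam; exact hlam
  -- get approximate kernel sequence
  have hseq : ∀ n : ℕ, ∃ u : E, ‖u‖ = 1 ∧ ‖T u‖ < 1 / (n + 1) := by
    intro n
    by_contra hcon
    push_neg at hcon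
    apply hTnu
    rw [ContinuousLinearMap.isUnit_iff_bijective,
      ContinuousLinearMap.bijective_iff_dense_range_and_antilipschitz]
    have hbd : ∀ u : E, ‖u‖ ≤ (((n : NNReal)) + 1) * ‖T u‖ := by
      intro u
      rcases eq_or_ne u 0 with rfl | hu
      · simp
      · have hnu : (0:ℝ) < ‖u‖ := norm_pos_iff.mpr hu
        have h1 : 1 / ((n:ℝ) + 1) ≤ ‖T (‖u‖⁻¹ • u)‖ := by
          apply hcon
          simp [norm_smul, abs_of_pos (inv_pos.mpr hnu), inv_mul_cancel₀ hnu.ne']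
        rw [map_smul, norm_smul, norm_inv, norm_norm] at h1
        rw [div_le_iff₀ (by positivity)] at h1
        push_cast
        nlinarith [inv_mul_cancel₀ hnu.ne', norm_nonneg (T u),
          mul_le_mul_of_nonneg_left h1 hnu.le]
    have hanti : AntilipschitzWith (((n : NNReal)) + 1) T :=
      T.antilipschitz_of_bound hbd
    refine ⟨?_, ⟨_, hanti⟩⟩
    have _inst := hanti.completeSpace_range_clm
    rw [Submodule.topologicalClosure_eq_top_iff, Submodule.eq_bot_iff]
    intro x hx
    have hTx : T x = 0 := by
      have h0 : ⟪T x, T x⟫_ℝ = 0 := by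
        rw [hTsym, real_inner_comm]
        exact hx (T (T x)) ⟨T x, rfl⟩
      simpa using inner_self_eq_zero.mp h0
    have := hbd x
    rw [hTx, norm_zero, mul_zero] at this
    exact norm_eq_zero.mp (le_antisymm this (norm_nonneg x))
  choose w hw1 hw2 using hseq
  refine ⟨w, ?_, ?_⟩
  · simpa [hw1] using tendsto_const_nhds (x := (1:ℝ)) (f := atTop (α := ℕ))
  · intro ε hε
    obtain ⟨N, hN⟩ := exists_nat_gt (1 / ε)
    filter_upwards [eventually_ge_atTop N] with n hn v hv
    have hv1 : ‖v‖ ≤ 1 := by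
      have := hsb v
      have h2 : ‖v‖ ^ 2 ≤ 1 := by nlinarith
      nlinarith [norm_nonneg v]
    have key : |⟪H (w n), v⟫_ℝ - lam * ⟪w n, v⟫_ℝ| = |⟪T (w n), v⟫_ℝ| := by
      rw [hTapp, inner_sub_left, inner_smul_left]
      rw [abs_sub_comm]
      norm_num
    rw [key]
    calc |⟪T (w n), v⟫_ℝ| ≤ ‖T (w n)‖ * ‖v‖ := abs_real_inner_le_norm _ _
    _ ≤ ‖T (w n)‖ * 1 := by
        exact mul_le_mul_of_nonneg_left hv1 (norm_nonneg _)
    _ ≤ ε := by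
        rw [mul_one]
        have h3 : ‖T (w n)‖ < 1 / (n + 1) := hw2 n
        have h4 : 1 / ((n:ℝ) + 1) ≤ ε := by
          rw [div_le_iff₀ (by positivity)]
          have : 1 / ε < (n:ℝ) + 1 := lt_of_lt_of_le hN (by exact_mod_cast Nat.le_succ_of_le hn)
          rw [div_lt_iff₀ hε] at this
          linarith
        linarith
end

section
/- Let E be a real Hilbert space and H : E → E a bounded self-adjoint operator which is semibounded, i.e. there is c ∈ ℝ with ⟨Hv, v⟩ ≥ c‖v‖² for all v ∈ E. Define the form norm ‖v‖_q² := ⟨Hv, v⟩ + (1 − c)‖v‖². Let λ ∈ ℝ. If there exists a sequence (w_n) in E with ‖w_n‖ → 1 such that sup { |⟨H w_n, v⟩ − λ⟨w_n, v⟩| : v ∈ E, ‖v‖_q ≤ 1 } → 0 as n → ∞, then λ belongs to the spectrum of H. -/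
open Filter Topology InnerProductSpace

/-- Weyl-type criterion, direction (ii) ⇒ (i): if for a bounded self-adjoint semibounded
operator `H` on a real Hilbert space there is a sequence `(w n)` with `‖w n‖ → 1` such that
`sup { |⟨H wₙ, v⟩ - λ⟨wₙ, v⟩| : ‖v‖_q ≤ 1 } → 0`, where
`‖v‖_q² = ⟨H v, v⟩ + (1 - c)‖v‖²`, then `λ` is in the spectrum of `H`. -/
theorem shnol_weyl_backward {E : Type*} [NormedAddCommGroup E] [InnerProductSpace ℝ E]
    [CompleteSpace E] (H : E →L[ℝ] E)
    (hsa : ∀ u v : E, ⟪H u, v⟫_ℝ = ⟪u, H v⟫_ℝ)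
    (c : ℝ) (hsb : ∀ v : E, c * ‖v‖ ^ 2 ≤ ⟪H v, v⟫_ℝ)
    (lam : ℝ) (w : ℕ → E)
    (hw : Tendsto (fun n => ‖w n‖) atTop (𝓝 1))
    (hweyl : ∀ ε > 0, ∀ᶠ n in atTop, ∀ v : E,
      ⟪H v, v⟫_ℝ + (1 - c) * ‖v‖ ^ 2 ≤ 1 →
      |⟪H (w n), v⟫_ℝ - lam * ⟪w n, v⟫_ℝ| ≤ ε) :
    lam ∈ spectrum ℝ H := by
  by_contra hspec
  rw [spectrum.mem_iff, not_not] at hspec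
  obtain ⟨B, hB⟩ : ∃ B : E →L[ℝ] E,
      ∀ x, B ((algebraMap ℝ (E →L[ℝ] E) lam - H) x) = x := by
    refine ⟨(↑(hspec.unit⁻¹) : E →L[ℝ] E), fun x => ?_⟩
    have h1 : ((↑(hspec.unit⁻¹) : E →L[ℝ] E) * (algebraMap ℝ (E →L[ℝ] E) lam - H)) = 1 := by
      exact hspec.val_inv_mul
    calc (↑(hspec.unit⁻¹) : E →L[ℝ] E) ((algebraMap ℝ (E →L[ℝ] E) lam - H) x)
        = ((↑(hspec.unit⁻¹) : E →L[ℝ] E) * (algebraMap ℝ (E →L[ℝ] E) lam - H)) x := rfl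
    _ = x := by rw [h1]; rfl
  set M : ℝ := ‖H‖ + |1 - c| + 1 with hM
  have hMpos : 0 < M := by positivity
  have hsM : 0 < Real.sqrt M := Real.sqrt_pos.mpr hMpos
  -- key estimate
  have key : ∀ ε > 0, ∀ᶠ n in atTop, ‖H (w n) - lam • w n‖ < ε := by
    intro ε hε
    have hε' : 0 < ε / (2 * Real.sqrt M) := by positivity
    filter_upwards [hweyl _ hε'] with n hn
    set y := H (w n) - lam • w n with hy
    by_cases hy0 : y = 0
    · simpa [hy0] using hε
    · have hny : (0:ℝ) < ‖y‖ := norm_pos_iff.mpr hy0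
      set v : E := (Real.sqrt M)⁻¹ • (‖y‖⁻¹ • y) with hv
      have hnv : ‖v‖ = (Real.sqrt M)⁻¹ := by
        rw [hv, norm_smul, norm_smul, norm_inv, norm_inv, Real.norm_eq_abs,
          abs_of_pos hsM, Real.norm_eq_abs, abs_of_pos hny]
        field_simp
      have hnv2 : ‖v‖ ^ 2 = M⁻¹ := by
        rw [hnv, inv_pow, Real.sq_sqrt hMpos.le]
      have hq : ⟪H v, v⟫_ℝ + (1 - c) * ‖v‖ ^ 2 ≤ 1 := by
        have h1 : ⟪H v, v⟫_ℝ ≤ ‖H‖ * ‖v‖ ^ 2 := by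
          calc ⟪H v, v⟫_ℝ ≤ ‖H v‖ * ‖v‖ := real_inner_le_norm _ _
          _ ≤ (‖H‖ * ‖v‖) * ‖v‖ := by
              exact mul_le_mul_of_nonneg_right (H.le_opNorm v) (norm_nonneg _)
          _ = ‖H‖ * ‖v‖ ^ 2 := by ring
        have h2 : (1 - c) * ‖v‖ ^ 2 ≤ |1 - c| * ‖v‖ ^ 2 :=
          mul_le_mul_of_nonneg_right (le_abs_self _) (by positivity)
        have h3 : ⟪H v, v⟫_ℝ + (1 - c) * ‖v‖ ^ 2 ≤ M * ‖v‖ ^ 2 := by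
          rw [hM]
          nlinarith [sq_nonneg ‖v‖]
        calc ⟪H v, v⟫_ℝ + (1 - c) * ‖v‖ ^ 2 ≤ M * ‖v‖ ^ 2 := h3
        _ = 1 := by rw [hnv2]; field_simp
      have hinner : ⟪H (w n), v⟫_ℝ - lam * ⟪w n, v⟫_ℝ = (Real.sqrt M)⁻¹ * ‖y‖ := by
        have : ⟪H (w n), v⟫_ℝ - lam * ⟪w n, v⟫_ℝ = ⟪y, v⟫_ℝ := by
          rw [hy, inner_sub_left, inner_smul_left]
          simp [RCLike.ofReal_real_eq_id]
        rw [this, hv, real_inner_smul_right, real_inner_smul_right,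
          real_inner_self_eq_norm_sq]
        field_simp
      have hb := hn v hq
      rw [hinner, abs_of_nonneg (by positivity)] at hb
      have : ‖y‖ ≤ ε / 2 := by
        calc ‖y‖ = ((Real.sqrt M)⁻¹ * ‖y‖) * Real.sqrt M := by field_simp
        _ ≤ ε / (2 * Real.sqrt M) * Real.sqrt M := mul_le_mul_of_nonneg_right hb hsM.le
        _ = ε / 2 := by field_simp
      linarith
  have hy0 : Tendsto (fun n => ‖H (w n) - lam • w n‖) atTop (𝓝 0) := by
    rw [Metric.tendsto_nhds]
    intro ε hε
    filter_upwards [key ε hε] with n hn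
    rwa [Real.dist_eq, sub_zero, abs_of_nonneg (norm_nonneg _)]
  have hbound : ∀ n, ‖w n‖ ≤ ‖B‖ * ‖H (w n) - lam • w n‖ := by
    intro n
    have hAw : (algebraMap ℝ (E →L[ℝ] E) lam - H) (w n) = lam • w n - H (w n) := by
      simp [Algebra.algebraMap_eq_smul_one, ContinuousLinearMap.sub_apply,
        ContinuousLinearMap.smul_apply, ContinuousLinearMap.one_apply]
    calc ‖w n‖ = ‖B ((algebraMap ℝ (E →L[ℝ] E) lam - H) (w n))‖ := by rw [hB]
    _ ≤ ‖B‖ * ‖(algebraMap ℝ (E →L[ℝ] E) lam - H) (w n)‖ := B.le_opNorm _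
    _ = ‖B‖ * ‖H (w n) - lam • w n‖ := by rw [hAw, norm_sub_rev]
  have h0 : Tendsto (fun n => ‖w n‖) atTop (𝓝 0) := by
    have hmul : Tendsto (fun n => ‖B‖ * ‖H (w n) - lam • w n‖) atTop (𝓝 (‖B‖ * 0)) :=
      hy0.const_mul _
    rw [mul_zero] at hmul
    exact squeeze_zero (fun n => norm_nonneg _) hbound hmul
  exact one_ne_zero (tendsto_nhds_unique hw h0)
end

section
/- Let X be a countable set, m : X → ℝ with m(x) > 0 for all x, and b : X × X → ℝ a symmetric weighted graph, i.e. b(x,y) ≥ 0, b(x,x) = 0, b(x,y) = b(y,x), and Σ_y b(x,y) < ∞ for every x. Let W : X → ℝ be bounded with ‖W‖_∞ := sup_x |W(x)|, let λ ∈ ℝ, and let u : X → ℝ with |u| ≤ 1 satisfy, for every finitely supported v : X → ℝ, Σ_{x,y} b(x,y)(u(x) − u(y))(v(x) − v(y)) + Σ_x W(x)u(x)v(x)m(x) = λ Σ_x u(x)v(x)m(x). Then for every finitely supported v : X → ℝ with Σ_{x,y} b(x,y)(v(x) − v(y))² + Σ_x W(x)v(x)²m(x) + (1 + ‖W‖_∞)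 Σ_x v(x)²m(x) ≤ 1, one has Σ_{x,y ∈ X} v(x)² b(x,y)(u(x) − u(y))² ≤ (1 + √(1 + |λ| + ‖W‖_∞))². -/
/-!
Test the eigenvalue equation against `v² u`. Since
`v(x)²u(x) − v(y)²u(y) = v(x)²(u(x) − u(y)) + u(y)(v(x)² − v(y)²)`, the energy `Q_b(u, v²u)` is
`T := Σ v(x)² b(x,y)(u(x) − u(y))²` plus a cross term. AM-GM with weight
`s = 1 + √(1 + |λ| + ‖W‖_∞)`, together with the symmetry of `b`, bounds the cross term below by
`−T/s − s Q_b(v)`, while the potential and eigenvalue terms are at most `(|λ| + ‖W‖_∞)‖v‖²`.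
As `Q_b(v) + ‖v‖² ≤ 1`, this gives `(1 − 1/s) T ≤ (|λ| + ‖W‖_∞) + s = s(s − 1)`, i.e. `T ≤ s²`.
All double sums converge absolutely since `v` has finite support and the rows of `b` are summable.
-/

open Function

theorem abs_mul_sub_mul_sq_sub_sq_le {s ux uy vx vy : ℝ} (hs : 0 < s) (huy : |uy| ≤ 1) :
    |uy * (ux - uy) * (vx ^ 2 - vy ^ 2)|
      ≤ (ux - uy) ^ 2 * (vx ^ 2 + vy ^ 2) / (2 * s) + s * (vx - vy) ^ 2 := by
  set A := (ux - uy) * (vx + vy)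
  set B := vx - vy
  have hAB : |uy * (ux - uy) * (vx ^ 2 - vy ^ 2)| ≤ |A| * |B| := by
    rw [show uy * (ux - uy) * (vx ^ 2 - vy ^ 2) = uy * (A * B) by ring, abs_mul, abs_mul A B]
    exact mul_le_of_le_one_left (by positivity) huy
  have hA : A ^ 2 ≤ 2 * ((ux - uy) ^ 2 * (vx ^ 2 + vy ^ 2)) := by
    nlinarith [mul_nonneg (sq_nonneg (ux - uy)) (sq_nonneg (vx - vy))]
  have hamgm : 4 * s * (|A| * |B|) ≤ A ^ 2 + 4 * s ^ 2 * B ^ 2 := by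
    nlinarith [sq_nonneg (|A| - 2 * s * |B|), sq_abs A, sq_abs B]
  rw [div_add' _ _ _ (by positivity), le_div_iff₀ (by positivity)]
  nlinarith

theorem abs_sub_mul_sq_mul_sub_sq_mul_le {ux uy vx vy : ℝ} (hux : |ux| ≤ 1) (huy : |uy| ≤ 1) :
    |(ux - uy) * (vx ^ 2 * ux - vy ^ 2 * uy)| ≤ 2 * (vx ^ 2 + vy ^ 2) := by
  have hdu : |ux - uy| ≤ 2 := (abs_sub _ _).trans (by linarith)
  have hw : |vx ^ 2 * ux - vy ^ 2 * uy| ≤ vx ^ 2 + vy ^ 2 := by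
    refine (abs_sub _ _).trans ?_
    rw [abs_mul, abs_mul, abs_sq, abs_sq]
    exact add_le_add (mul_le_of_le_one_right (sq_nonneg _) hux)
      (mul_le_of_le_one_right (sq_nonneg _) huy)
  rw [abs_mul]
  exact mul_le_mul hdu hw (abs_nonneg _) zero_le_two

theorem le_one_add_sqrt_sq {a N Q T : ℝ} (ha : 0 ≤ a) (hN : N ≤ 1) (hQ : Q ≤ 1)
    (h : T - T / (1 + √(1 + a)) - (1 + √(1 + a)) * Q ≤ a * N) :
    T ≤ (1 + √(1 + a)) ^ 2 := by
  set c := √(1 + a)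
  have hc1 : 1 ≤ c := Real.one_le_sqrt.2 (by linarith)
  have hc2 : c ^ 2 = 1 + a := Real.sq_sqrt (by linarith)
  have hs : 0 < 1 + c := by linarith
  have h' : c * T ≤ (1 + c) * (a * N + (1 + c) * Q) := by
    have := mul_le_mul_of_nonneg_left h hs.le
    rw [mul_sub, mul_sub, mul_div_cancel₀ _ hs.ne'] at this
    linarith
  nlinarith [mul_le_mul_of_nonneg_left hN ha, mul_le_mul_of_nonneg_left hQ hs.le]

section WeightedGraph

variable {X : Type*} {b : X → X → ℝ} {v : X → ℝ}

theorem summable_of_finite_support_of_imp {g : X → ℝ} (hv : (support v).Finite)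
    (hg : ∀ x, v x = 0 → g x = 0) : Summable g :=
  summable_of_hasFiniteSupport (hv.subset fun x hx => mt (hg x) hx)

theorem summable_prod_mul_of_finite_support (hb : ∀ x y, 0 ≤ b x y)
    (hb_sum : ∀ x, Summable (b x)) (hv : (support v).Finite) :
    Summable fun p : X × X => b p.1 p.2 * v p.1 := by
  refine Summable.of_norm_bounded (g := fun p : X × X => b p.1 p.2 * |v p.1|) ?_ fun p => ?_
  · have hnonneg : 0 ≤ fun p : X × X => b p.1 p.2 * |v p.1| :=
      fun p => mul_nonneg (hb _ _) (abs_nonneg _)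
    have hrow : ∀ x, Summable fun y => b x y * |v x| := fun x => (hb_sum x).mul_right _
    have hcol : Summable fun x => ∑' y, b x y * |v x| :=
      summable_of_finite_support_of_imp hv fun x hx => by
        simp only [hx, abs_zero, mul_zero, tsum_zero]
    exact (summable_prod_of_nonneg hnonneg).2 ⟨hrow, hcol⟩
  · rw [Real.norm_eq_abs, abs_mul, abs_of_nonneg (hb _ _)]

theorem summable_prod_mul_sq_add_sq (hb : ∀ x y, 0 ≤ b x y) (hb_symm : ∀ x y, b x y = b y x)
    (hb_sum : ∀ x, Summable (b x)) (hv : (support v).Finite) :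
    Summable fun p : X × X => b p.1 p.2 * (v p.1 ^ 2 + v p.2 ^ 2) := by
  have h := summable_prod_mul_of_finite_support hb hb_sum
    (v := fun x => v x ^ 2) (by rwa [support_pow _ two_ne_zero])
  refine (h.add ((Equiv.prodComm X X).summable_iff.2 h)).congr fun p => ?_
  simp only [comp_apply, Equiv.prodComm_apply, Prod.fst_swap, Prod.snd_swap, hb_symm p.2 p.1]
  ring

theorem hasSum_uncurry_of_abs_le (hb : ∀ x y, 0 ≤ b x y) (hb_symm : ∀ x y, b x y = b y x)
    (hb_sum : ∀ x, Summable (b x)) (hv : (support v).Finite) {f : X → X → ℝ} {C : ℝ}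
    (hf : ∀ x y, |f x y| ≤ C * (b x y * (v x ^ 2 + v y ^ 2))) :
    HasSum (uncurry f) (∑' x, ∑' y, f x y) := by
  have h : Summable (uncurry f) :=
    .of_norm_bounded ((summable_prod_mul_sq_add_sq hb hb_symm hb_sum hv).mul_left C)
      fun p => hf p.1 p.2
  simpa [h.tsum_prod] using h.hasSum

theorem abs_tsum_mul_sq_mul_le {m V : X → ℝ} {K : ℝ} (hv : (support v).Finite)
    (hm : ∀ x, 0 < m x) (hV : ∀ x, |V x| ≤ K) :
    |∑' x, V x * (v x ^ 2 * m x)| ≤ K * ∑' x, v x ^ 2 * m x := by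
  have hvm : ∀ x, 0 ≤ v x ^ 2 * m x := fun x => mul_nonneg (sq_nonneg _) (hm x).le
  have hsum : Summable fun x => v x ^ 2 * m x :=
    summable_of_finite_support_of_imp hv fun x hx => by simp [hx]
  calc |∑' x, V x * (v x ^ 2 * m x)| ≤ ∑' x, ‖V x * (v x ^ 2 * m x)‖ :=
        norm_tsum_le_tsum_norm (f := fun x => V x * (v x ^ 2 * m x))
          (summable_of_finite_support_of_imp hv fun x hx => by simp [hx])
    _ ≤ ∑' x, K * (v x ^ 2 * m x) := by
        refine (summable_of_finite_support_of_imp hv fun x hx => by simp [hx]).tsum_le_tsum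
          (fun x => ?_) (hsum.mul_left K)
        rw [Real.norm_eq_abs, abs_mul, abs_of_nonneg (hvm x)]
        exact mul_le_mul_of_nonneg_right (hV x) (hvm x)
    _ = K * ∑' x, v x ^ 2 * m x := tsum_mul_left

theorem energy_le_of_eigen_eq {m W u : X → ℝ} {M lam E : ℝ} (hv : (support v).Finite)
    (hm : ∀ x, 0 < m x) (hu : ∀ x, |u x| ≤ 1) (hWM : ∀ x, |W x| ≤ M) (hM0 : 0 ≤ M)
    (heq : E + ∑' x, W x * u x * (v x ^ 2 * u x) * m x
      = lam * ∑' x, u x * (v x ^ 2 * u x) * m x) :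
    E ≤ (|lam| + M) * ∑' x, v x ^ 2 * m x := by
  have hu2 : ∀ x, u x ^ 2 ≤ 1 := fun x => (sq_le_one_iff_abs_le_one _).2 (hu x)
  have hWu : |∑' x, W x * u x * (v x ^ 2 * u x) * m x| ≤ M * ∑' x, v x ^ 2 * m x := by
    have := abs_tsum_mul_sq_mul_le hv hm (V := fun x => W x * u x ^ 2) (K := M) fun x => by
      rw [abs_mul, abs_sq, ← mul_one M]
      exact mul_le_mul (hWM x) (hu2 x) (sq_nonneg _) hM0
    convert this using 3
    funext x
    ring
  have hu : |∑' x, u x * (v x ^ 2 * u x) * m x| ≤ ∑' x, v x ^ 2 * m x := by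
    have := abs_tsum_mul_sq_mul_le hv hm (V := fun x => u x ^ 2) (K := 1) fun x =>
      (abs_sq _).trans_le (hu2 x)
    rw [one_mul] at this
    convert this using 3
    funext x
    ring
  have hlam : lam * ∑' x, u x * (v x ^ 2 * u x) * m x ≤ |lam| * ∑' x, v x ^ 2 * m x :=
    (le_abs_self _).trans (abs_mul lam _ ▸ mul_le_mul_of_nonneg_left hu (abs_nonneg lam))
  linarith [neg_abs_le (∑' x, W x * u x * (v x ^ 2 * u x) * m x)]

theorem energy_sq_mul_ge (hb : ∀ x y, 0 ≤ b x y) (hb_symm : ∀ x y, b x y = b y x)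
    (hb_sum : ∀ x, Summable (b x)) (hv : (support v).Finite) {u : X → ℝ}
    (hu : ∀ x, |u x| ≤ 1) {s : ℝ} (hs : 0 < s) :
    (∑' x, ∑' y, v x ^ 2 * b x y * (u x - u y) ^ 2)
        - (∑' x, ∑' y, v x ^ 2 * b x y * (u x - u y) ^ 2) / s
        - s * ∑' x, ∑' y, b x y * (v x - v y) ^ 2
      ≤ ∑' x, ∑' y, b x y * (u x - u y) * (v x ^ 2 * u x - v y ^ 2 * u y) := by
  set T := ∑' x, ∑' y, v x ^ 2 * b x y * (u x - u y) ^ 2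
  have hdu2 : ∀ x y, (u x - u y) ^ 2 ≤ 4 := fun x y => by
    nlinarith [abs_le.1 (hu x), abs_le.1 (hu y)]
  have hT := hasSum_uncurry_of_abs_le hb hb_symm hb_sum hv (C := 4)
    (f := fun x y => v x ^ 2 * b x y * (u x - u y) ^ 2) fun x y => by
      rw [abs_of_nonneg (by have := hb x y; positivity)]
      nlinarith [mul_le_mul_of_nonneg_left (hdu2 x y) (mul_nonneg (sq_nonneg (v x)) (hb x y)),
        mul_nonneg (hb x y) (sq_nonneg (v y))]
  have hT' : HasSum (fun p : X × X => v p.2 ^ 2 * b p.1 p.2 * (u p.1 - u p.2) ^ 2) T := by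
    convert (Equiv.prodComm X X).hasSum_iff.2 hT using 1
    funext ⟨x, y⟩
    simp only [comp_apply, Equiv.prodComm_apply, Prod.swap_prod_mk, uncurry_apply_pair, hb_symm x y]
    ring
  have hQ := hasSum_uncurry_of_abs_le hb hb_symm hb_sum hv (C := 2)
    (f := fun x y => b x y * (v x - v y) ^ 2) fun x y => by
      rw [abs_of_nonneg (by have := hb x y; positivity)]
      nlinarith [mul_nonneg (hb x y) (sq_nonneg (v x + v y))]
  have hE := hasSum_uncurry_of_abs_le hb hb_symm hb_sum hv (C := 2)
    (f := fun x y => b x y * (u x - u y) * (v x ^ 2 * u x - v y ^ 2 * u y)) fun x y => by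
      rw [mul_assoc, abs_mul, abs_of_nonneg (hb x y), mul_left_comm]
      exact mul_le_mul_of_nonneg_left (abs_sub_mul_sq_mul_sub_sq_mul_le (hu x) (hu y)) (hb x y)
  have hpt : ∀ p : X × X, v p.1 ^ 2 * b p.1 p.2 * (u p.1 - u p.2) ^ 2
      - (v p.1 ^ 2 * b p.1 p.2 * (u p.1 - u p.2) ^ 2
        + v p.2 ^ 2 * b p.1 p.2 * (u p.1 - u p.2) ^ 2) / (2 * s)
      - s * (b p.1 p.2 * (v p.1 - v p.2) ^ 2)
      ≤ b p.1 p.2 * (u p.1 - u p.2) * (v p.1 ^ 2 * u p.1 - v p.2 ^ 2 * u p.2) := fun ⟨x, y⟩ => by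
    have := mul_le_mul_of_nonneg_left
      (neg_le_of_abs_le (abs_mul_sub_mul_sq_sub_sq_le (ux := u x) (vx := v x) (vy := v y) hs (hu y)))
      (hb x y)
    linear_combination this
  have hhalf : (T + T) / (2 * s) = T / s := by field_simp; ring
  have := hasSum_le hpt ((hT.sub ((hT.add hT').div_const (2 * s))).sub (hQ.mul_left s)) hE
  rwa [hhalf] at this

end WeightedGraph

theorem discrete_caccioppoli_general {X : Type*}
    (m : X → ℝ) (hm : ∀ x, 0 < m x)
    (b : X → X → ℝ) (hb_nonneg : ∀ x y, 0 ≤ b x y)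
    (hb_symm : ∀ x y, b x y = b y x) (hb_sum : ∀ x, Summable fun y => b x y)
    (W : X → ℝ) (hWbd : BddAbove (Set.range fun x => |W x|))
    (M : ℝ) (hM : M = ⨆ x, |W x|)
    (lam : ℝ) (u : X → ℝ) (hub : ∀ x, |u x| ≤ 1)
    (heig : ∀ v : X → ℝ, (Function.support v).Finite →
      (∑' x, ∑' y, b x y * (u x - u y) * (v x - v y)) + (∑' x, W x * u x * v x * m x)
        = lam * ∑' x, u x * v x * m x) :
    ∀ v : X → ℝ, (Function.support v).Finite →
      (∑' x, ∑' y, b x y * (v x - v y) ^ 2) + (∑' x, W x * v x ^ 2 * m x)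
        + (1 + M) * (∑' x, v x ^ 2 * m x) ≤ 1 →
      (∑' x, ∑' y, v x ^ 2 * b x y * (u x - u y) ^ 2)
        ≤ (1 + Real.sqrt (1 + |lam| + M)) ^ 2 := by
  intro v hv hnorm
  have hWM : ∀ x, |W x| ≤ M := fun x => hM ▸ le_ciSup hWbd x
  have hM0 : 0 ≤ M := hM ▸ Real.iSup_nonneg fun x => abs_nonneg (W x)
  set N := ∑' x, v x ^ 2 * m x
  set Q := ∑' x, ∑' y, b x y * (v x - v y) ^ 2
  have hN0 : 0 ≤ N := tsum_nonneg fun x => mul_nonneg (sq_nonneg _) (hm x).le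
  have hQ0 : 0 ≤ Q :=
    tsum_nonneg fun x => tsum_nonneg fun y => mul_nonneg (hb_nonneg x y) (sq_nonneg _)
  have hWv : |∑' x, W x * v x ^ 2 * m x| ≤ M * N := by
    simpa only [mul_assoc] using abs_tsum_mul_sq_mul_le hv hm hWM
  have hNQ : N + Q ≤ 1 := by linarith [neg_abs_le (∑' x, W x * v x ^ 2 * m x)]
  have heig_v := heig (fun x => v x ^ 2 * u x)
    (hv.subset ((support_mul_subset_left _ _).trans (support_pow v two_ne_zero).le))
  have henergy := energy_sq_mul_ge hb_nonneg hb_symm hb_sum hv hub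
    (s := 1 + √(1 + (|lam| + M))) (by positivity)
  rw [add_assoc]
  refine le_one_add_sqrt_sq (N := N) (Q := Q) (add_nonneg (abs_nonneg lam) hM0)
    (by linarith) (by linarith) ?_
  linarith [energy_le_of_eigen_eq hv hm hub hWM hM0 heig_v]

/-- Discrete Caccioppoli-type estimate (Proposition 6.1), for finitely supported test
functions: if `u` is a generalized eigenfunction with eigenvalue `λ` of the graph
Schrödinger operator `L + W` with `|u| ≤ 1`, then
`Σ_{x,y} v(x)² b(x,y)(u(x) − u(y))² ≤ (1 + √(1 + |λ| + ‖W‖_∞))²` for every finitely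
supported `v` with `‖v‖_{Q_{b,W}} ≤ 1`. -/
theorem discrete_caccioppoli {X : Type*} [Countable X]
    (m : X → ℝ) (hm : ∀ x, 0 < m x)
    (b : X → X → ℝ) (hb_nonneg : ∀ x y, 0 ≤ b x y) (hb_diag : ∀ x, b x x = 0)
    (hb_symm : ∀ x y, b x y = b y x) (hb_sum : ∀ x, Summable fun y => b x y)
    (W : X → ℝ) (hWbd : BddAbove (Set.range fun x => |W x|))
    (M : ℝ) (hM : M = ⨆ x, |W x|)
    (lam : ℝ) (u : X → ℝ) (hub : ∀ x, |u x| ≤ 1)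
    (heig : ∀ v : X → ℝ, (Function.support v).Finite →
      (∑' x, ∑' y, b x y * (u x - u y) * (v x - v y)) + (∑' x, W x * u x * v x * m x)
        = lam * ∑' x, u x * v x * m x) :
    ∀ v : X → ℝ, (Function.support v).Finite →
      (∑' x, ∑' y, b x y * (v x - v y) ^ 2) + (∑' x, W x * v x ^ 2 * m x)
        + (1 + M) * (∑' x, v x ^ 2 * m x) ≤ 1 →
      (∑' x, ∑' y, v x ^ 2 * b x y * (u x - u y) ^ 2)
        ≤ (1 + Real.sqrt (1 + |lam| + M)) ^ 2 :=
  discrete_caccioppoli_general m hm b hb_nonneg hb_symm hb_sum W hWbd M hM lam u hub heig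
end

section
/- Let X be a countable set, m : X → ℝ with m(x) > 0 for all x, and b : X × X → ℝ a symmetric weighted graph, i.e. b(x,y) ≥ 0, b(x,x) = 0, b(x,y) = b(y,x), and Σ_y b(x,y) < ∞ for every x. Let W : X → ℝ be bounded with ‖W‖_∞ := sup_x |W(x)|, let λ ∈ ℝ, and let u : X → ℝ with |u| ≤ 1 satisfy, for every finitely supported v₀ : X → ℝ, Σ_{x,y} b(x,y)(u(x) − u(y))(v₀(x) − v₀(y)) + Σ_x W(x)u(x)v₀(x)m(x) = λ Σ_x u(x)v₀(x)m(x). Let v : X → ℝ and suppose there is a sequence (v_n) of finitely supported functions with v_n(x) → v(x) for every x ∈ X and, for each n, Σ_{x,y} b(x,y)(v_n(x) − v_n(y))² + Σ_x W(x)v_n(x)²m(x) + (1 + ‖W‖_∞) Σ_x v_n(x)²m(x) ≤ 1. Then Σ_{x,y ∈ X} v(x)² b(x,y)(u(x) − u(y))² ≤ (1 + √(1 + |λ| + ‖W‖_∞))². -/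
open Filter Topology

section CaccioppoliAux
open Function


private lemma summable_fst {X : Type*} (b : X → X → ℝ) (hb_nonneg : ∀ x y, 0 ≤ b x y)
    (hb_sum : ∀ x, Summable fun y => b x y) (φ : X → ℝ) (hφ : (support φ).Finite)
    (hφn : ∀ x, 0 ≤ φ x) :
    Summable (fun p : X × X => b p.1 p.2 * φ p.1) := by
  rw [summable_prod_of_nonneg (fun p => mul_nonneg (hb_nonneg _ _) (hφn _))]
  refine ⟨fun x => (hb_sum x).mul_right (φ x), ?_⟩
  apply summable_of_ne_finset_zero (s := hφ.toFinset)
  intro x hx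
  have : φ x = 0 := by by_contra h; exact hx (hφ.mem_toFinset.mpr h)
  simp [this]

private lemma summable_snd {X : Type*} (b : X → X → ℝ) (hb_nonneg : ∀ x y, 0 ≤ b x y)
    (hb_symm : ∀ x y, b x y = b y x)
    (hb_sum : ∀ x, Summable fun y => b x y) (ψ : X → ℝ) (hψ : (support ψ).Finite)
    (hψn : ∀ x, 0 ≤ ψ x) :
    Summable (fun p : X × X => b p.1 p.2 * ψ p.2) := by
  have h := summable_fst b hb_nonneg hb_sum ψ hψ hψn
  rw [← (Equiv.prodComm X X).summable_iff]
  refine h.congr fun p => ?_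
  simp [Equiv.prodComm, hb_symm p.1 p.2]

/-- domination lemma: if |f p| ≤ b p.1 p.2 * φ p.1 + b p.1 p.2 * ψ p.2 then f summable -/
private lemma summable_dom {X : Type*} {f : X × X → ℝ} (b : X → X → ℝ)
    (hb_nonneg : ∀ x y, 0 ≤ b x y) (hb_symm : ∀ x y, b x y = b y x)
    (hb_sum : ∀ x, Summable fun y => b x y) (φ ψ : X → ℝ)
    (hφ : (support φ).Finite) (hφn : ∀ x, 0 ≤ φ x)
    (hψ : (support ψ).Finite) (hψn : ∀ x, 0 ≤ ψ x)
    (hdom : ∀ p : X × X, |f p| ≤ b p.1 p.2 * φ p.1 + b p.1 p.2 * ψ p.2) :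
    Summable f := by
  rw [← summable_abs_iff]
  exact Summable.of_nonneg_of_le (fun p => abs_nonneg _) hdom
    ((summable_fst b hb_nonneg hb_sum φ hφ hφn).add
      (summable_snd b hb_nonneg hb_symm hb_sum ψ hψ hψn))

private lemma ptbound (ε B d wx wy uy : ℝ) (hε : 0 < ε) (hB : 0 ≤ B) (huy : |uy| ≤ 1) :
    |B * d * (uy * (wx^2 - wy^2))|
      ≤ ε/2 * (wx^2 * B * d^2) + ε/2 * (wy^2 * B * d^2) + 1/ε * (B * (wx - wy)^2) := by
  have amgm : ∀ s t : ℝ, s * t ≤ ε/2 * s^2 + 1/(2*ε) * t^2 := by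
    intro s t
    have key : 2*ε*(s*t) ≤ 2*ε*(ε/2*s^2 + 1/(2*ε)*t^2) := by
      have h1 : 2*ε*(1/(2*ε)*t^2) = t^2 := by field_simp
      nlinarith [sq_nonneg (ε*s - t)]
    exact le_of_mul_le_mul_left key (by positivity)
  have habs : |B * d * (uy * (wx^2 - wy^2))| = B * (|d| * (|uy| * |wx^2 - wy^2|)) := by
    rw [abs_mul, abs_mul, abs_mul, abs_of_nonneg hB]; ring
  have h1 : |d| * |wx| * |wx - wy| ≤ ε/2 * (d^2 * wx^2) + 1/(2*ε) * ((wx - wy)^2) := by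
    have := amgm (|d| * |wx|) (|wx - wy|)
    simpa [mul_pow, sq_abs] using this
  have h2 : |d| * |wy| * |wx - wy| ≤ ε/2 * (d^2 * wy^2) + 1/(2*ε) * ((wx - wy)^2) := by
    have := amgm (|d| * |wy|) (|wx - wy|)
    simpa [mul_pow, sq_abs] using this
  have hz : |wx^2 - wy^2| ≤ |wx - wy| * (|wx| + |wy|) := by
    rw [show wx^2 - wy^2 = (wx - wy) * (wx + wy) by ring, abs_mul]
    exact mul_le_mul_of_nonneg_left (abs_add_le _ _) (abs_nonneg _)
  have hXY : |d| * (|uy| * |wx^2 - wy^2|)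
      ≤ ε/2 * (wx^2 * d^2) + ε/2 * (wy^2 * d^2) + 1/ε * (wx - wy)^2 := by
    have step1 : |d| * (|uy| * |wx^2 - wy^2|) ≤ |d| * (1 * (|wx - wy| * (|wx| + |wy|))) := by
      gcongr <;> first | positivity | exact huy | exact hz
    have step2 : |d| * (1 * (|wx - wy| * (|wx| + |wy|)))
        = |d| * |wx| * |wx - wy| + |d| * |wy| * |wx - wy| := by ring
    have step3 : (ε/2 * (d^2 * wx^2) + 1/(2*ε) * ((wx - wy)^2))
        + (ε/2 * (d^2 * wy^2) + 1/(2*ε) * ((wx - wy)^2))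
        = ε/2 * (wx^2 * d^2) + ε/2 * (wy^2 * d^2) + 1/ε * (wx - wy)^2 := by
      field_simp; ring
    linarith [step2 ▸ step1, add_le_add h1 h2, step3.ge]
  calc |B * d * (uy * (wx^2 - wy^2))| = B * (|d| * (|uy| * |wx^2 - wy^2|)) := habs
    _ ≤ B * (ε/2 * (wx^2 * d^2) + ε/2 * (wy^2 * d^2) + 1/ε * (wx - wy)^2) :=
        mul_le_mul_of_nonneg_left hXY hB
    _ = ε/2 * (wx^2 * B * d^2) + ε/2 * (wy^2 * B * d^2) + 1/ε * (B * (wx - wy)^2) := by ring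

private lemma caccio_summable {X : Type*} (b : X → X → ℝ) (hb_nonneg : ∀ x y, 0 ≤ b x y)
    (hb_symm : ∀ x y, b x y = b y x) (hb_sum : ∀ x, Summable fun y => b x y)
    (u : X → ℝ) (hub : ∀ x, |u x| ≤ 1)
    (w : X → ℝ) (hw : (support w).Finite) :
    Summable (fun p : X × X => w p.1 ^ 2 * b p.1 p.2 * (u p.1 - u p.2) ^ 2) := by
  apply summable_dom b hb_nonneg hb_symm hb_sum (fun x => 4 * w x ^ 2) (fun _ => 0)
  · exact (hw.subset (by intro x hx; simp only [mem_support] at hx ⊢; intro h; apply hx; simp [h]))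
  · intro x; positivity
  · exact Set.finite_empty.subset (by simp [support])
  · intro x; exact le_refl 0
  · intro p
    have h1 : |u p.1 - u p.2| ≤ 2 := by
      have := hub p.1; have := hub p.2
      calc |u p.1 - u p.2| ≤ |u p.1| + |u p.2| := abs_sub _ _
        _ ≤ 2 := by linarith
    have h2 : (u p.1 - u p.2) ^ 2 ≤ 4 := by
      have := pow_le_pow_left₀ (abs_nonneg (u p.1 - u p.2)) h1 2
      rw [sq_abs] at this
      norm_num at this
      linarith
    have hB := hb_nonneg p.1 p.2
    have habs : |w p.1 ^ 2 * b p.1 p.2 * (u p.1 - u p.2) ^ 2|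
        = w p.1 ^ 2 * b p.1 p.2 * (u p.1 - u p.2) ^ 2 := abs_of_nonneg (by positivity)
    rw [habs]
    have hnn : 0 ≤ w p.1 ^ 2 * b p.1 p.2 := mul_nonneg (sq_nonneg _) hB
    have h3 : w p.1 ^ 2 * b p.1 p.2 * (u p.1 - u p.2) ^ 2 ≤ w p.1 ^ 2 * b p.1 p.2 * 4 :=
      mul_le_mul_of_nonneg_left h2 hnn
    have h4 : w p.1 ^ 2 * b p.1 p.2 * 4 = b p.1 p.2 * (4 * w p.1 ^ 2) + b p.1 p.2 * 0 := by ring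
    linarith

set_option maxHeartbeats 1000000 in
private lemma caccio_key {X : Type*} [Countable X]
    (m : X → ℝ) (hm : ∀ x, 0 < m x)
    (b : X → X → ℝ) (hb_nonneg : ∀ x y, 0 ≤ b x y)
    (hb_symm : ∀ x y, b x y = b y x) (hb_sum : ∀ x, Summable fun y => b x y)
    (W : X → ℝ) (hWbd : BddAbove (Set.range fun x => |W x|))
    (M : ℝ) (hM : M = ⨆ x, |W x|) (hMnn : 0 ≤ M)
    (lam : ℝ) (u : X → ℝ) (hub : ∀ x, |u x| ≤ 1)
    (heig : ∀ v₀ : X → ℝ, (Function.support v₀).Finite →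
      (∑' x, ∑' y, b x y * (u x - u y) * (v₀ x - v₀ y)) + (∑' x, W x * u x * v₀ x * m x)
        = lam * ∑' x, u x * v₀ x * m x)
    (w : X → ℝ) (hw : (support w).Finite)
    (hwn : (∑' x, ∑' y, b x y * (w x - w y) ^ 2) + (∑' x, W x * w x ^ 2 * m x)
        + (1 + M) * (∑' x, w x ^ 2 * m x) ≤ 1) :
    (∑' p : X × X, w p.1 ^ 2 * b p.1 p.2 * (u p.1 - u p.2) ^ 2)
      ≤ (1 + Real.sqrt (1 + |lam| + M)) ^ 2 := by
  classical
  have hWle : ∀ x, |W x| ≤ M := fun x => hM ▸ le_ciSup hWbd x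
  have hu2 : ∀ x, u x ^ 2 ≤ 1 := by
    intro x
    have h := pow_le_pow_left₀ (abs_nonneg (u x)) (hub x) 2
    rwa [sq_abs, one_pow] at h
  -- finite-support helper for single sums
  have hfin : ∀ g : X → ℝ, (∀ x, w x = 0 → g x = 0) → Summable g := by
    intro g hg
    apply summable_of_ne_finset_zero (s := hw.toFinset)
    intro x hx
    apply hg
    by_contra h
    exact hx (hw.mem_toFinset.mpr h)
  have hwsq_fin : (support fun x => w x ^ 2).Finite :=
    hw.subset (by intro x hx; simp only [mem_support] at hx ⊢; intro h; apply hx; simp [h])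
  have hwsq_fin2 : (support fun x => 2 * w x ^ 2).Finite :=
    hw.subset (by intro x hx; simp only [mem_support] at hx ⊢; intro h; apply hx; simp [h])
  -- single sums
  set S := ∑' x, w x ^ 2 * m x with hS_def
  have hSsum : Summable (fun x => w x ^ 2 * m x) := hfin _ (by intro x h; simp [h])
  have hS0 : 0 ≤ S := tsum_nonneg (fun x => mul_nonneg (sq_nonneg _) (hm x).le)
  have hWSsum : Summable (fun x => W x * w x ^ 2 * m x) := hfin _ (by intro x h; simp [h])
  set WS := ∑' x, W x * w x ^ 2 * m x with hWS_def
  have hWS_lb : -(M * S) ≤ WS := by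
    rw [hWS_def, hS_def, ← tsum_mul_left, ← tsum_neg]
    apply Summable.tsum_le_tsum _ ((hSsum.mul_left M).neg) hWSsum
    intro x
    have h := abs_le.mp (hWle x)
    have hP : 0 ≤ w x ^ 2 * m x := mul_nonneg (sq_nonneg _) (hm x).le
    have := mul_le_mul_of_nonneg_right h.1 hP
    linarith [this]
  -- Q : the energy of w, as sum over the product
  set qf : X × X → ℝ := fun p => b p.1 p.2 * (w p.1 - w p.2) ^ 2 with hqf_def
  have hqsum : Summable qf := by
    apply summable_dom b hb_nonneg hb_symm hb_sum (fun x => 2 * w x ^ 2) (fun x => 2 * w x ^ 2)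
      hwsq_fin2 (fun x => by positivity) hwsq_fin2 (fun x => by positivity)
    intro p
    have hB := hb_nonneg p.1 p.2
    have habs : |qf p| = qf p := abs_of_nonneg (by positivity)
    rw [habs]
    have h2 : (w p.1 - w p.2) ^ 2 ≤ 2 * w p.1 ^ 2 + 2 * w p.2 ^ 2 := by nlinarith [sq_nonneg (w p.1 + w p.2)]
    simp only [hqf_def]
    have h3 := mul_le_mul_of_nonneg_left h2 hB
    have h4 : b p.1 p.2 * (2 * w p.1 ^ 2 + 2 * w p.2 ^ 2)
        = b p.1 p.2 * (2 * w p.1 ^ 2) + b p.1 p.2 * (2 * w p.2 ^ 2) := by ring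
    linarith
  set Q := ∑' p : X × X, qf p with hQ_def
  have hQ0 : 0 ≤ Q := tsum_nonneg (fun p => mul_nonneg (hb_nonneg _ _) (sq_nonneg _))
  have hQ_iter : (∑' x, ∑' y, b x y * (w x - w y) ^ 2) = Q := (Summable.tsum_prod hqsum).symm
  -- from the norm bound : Q + S ≤ 1
  have hQS : Q + S ≤ 1 := by
    rw [hQ_iter] at hwn
    have hring : (1 + M) * S = S + M * S := by ring
    linarith [hWS_lb]
  have hQ1 : Q ≤ 1 := by linarith
  have hS1 : S ≤ 1 := by linarith
  -- the test function v₀ = w² u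
  set v₀ : X → ℝ := fun x => w x ^ 2 * u x with hv₀_def
  have hv₀_fin : (support v₀).Finite :=
    hw.subset (by intro x hx; simp only [mem_support, hv₀_def] at hx ⊢; intro h; apply hx; simp [h])
  have hv₀_bd : ∀ x, |v₀ x| ≤ w x ^ 2 := by
    intro x
    simp only [hv₀_def, abs_mul, abs_pow, sq_abs]
    calc w x ^ 2 * |u x| ≤ w x ^ 2 * 1 := mul_le_mul_of_nonneg_left (hub x) (by positivity)
      _ = w x ^ 2 := by ring
  -- summand of the eigen-equation
  set ef : X × X → ℝ := fun p => b p.1 p.2 * (u p.1 - u p.2) * (v₀ p.1 - v₀ p.2) with hef_def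
  have hef_dom : ∀ p : X × X, |ef p| ≤ b p.1 p.2 * (2 * w p.1 ^ 2) + b p.1 p.2 * (2 * w p.2 ^ 2) := by
    intro p
    have hB := hb_nonneg p.1 p.2
    have h1 : |u p.1 - u p.2| ≤ 2 := by
      calc |u p.1 - u p.2| ≤ |u p.1| + |u p.2| := abs_sub _ _
        _ ≤ 2 := by linarith [hub p.1, hub p.2]
    have h2 : |v₀ p.1 - v₀ p.2| ≤ w p.1 ^ 2 + w p.2 ^ 2 := by
      calc |v₀ p.1 - v₀ p.2| ≤ |v₀ p.1| + |v₀ p.2| := abs_sub _ _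
        _ ≤ w p.1 ^ 2 + w p.2 ^ 2 := add_le_add (hv₀_bd p.1) (hv₀_bd p.2)
    calc |ef p| = b p.1 p.2 * (|u p.1 - u p.2| * |v₀ p.1 - v₀ p.2|) := by
          simp only [hef_def]; rw [abs_mul, abs_mul, abs_of_nonneg hB]; ring
      _ ≤ b p.1 p.2 * (2 * (w p.1 ^ 2 + w p.2 ^ 2)) := by
          apply mul_le_mul_of_nonneg_left _ hB
          have := mul_le_mul h1 h2 (abs_nonneg _) (by norm_num)
          linarith [this]
      _ = b p.1 p.2 * (2 * w p.1 ^ 2) + b p.1 p.2 * (2 * w p.2 ^ 2) := by ring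
  have hefsum : Summable ef :=
    summable_dom b hb_nonneg hb_symm hb_sum _ _ hwsq_fin2 (fun x => by positivity)
      hwsq_fin2 (fun x => by positivity) hef_dom
  -- the main summand A
  set af : X × X → ℝ := fun p => w p.1 ^ 2 * b p.1 p.2 * (u p.1 - u p.2) ^ 2 with haf_def
  have hafsum : Summable af := caccio_summable b hb_nonneg hb_symm hb_sum u hub w hw
  set A := ∑' p : X × X, af p with hA_def
  have hA0 : 0 ≤ A := tsum_nonneg (fun p => mul_nonneg (mul_nonneg (sq_nonneg _) (hb_nonneg _ _)) (sq_nonneg _))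
  -- the remainder summand
  set rf : X × X → ℝ := fun p => b p.1 p.2 * (u p.1 - u p.2) * (u p.2 * (w p.1 ^ 2 - w p.2 ^ 2))
    with hrf_def
  have hrf_dom : ∀ p : X × X, |rf p| ≤ b p.1 p.2 * (2 * w p.1 ^ 2) + b p.1 p.2 * (2 * w p.2 ^ 2) := by
    intro p
    have hB := hb_nonneg p.1 p.2
    have h1 : |u p.1 - u p.2| ≤ 2 := by
      calc |u p.1 - u p.2| ≤ |u p.1| + |u p.2| := abs_sub _ _
        _ ≤ 2 := by linarith [hub p.1, hub p.2]
    have h2 : |u p.2 * (w p.1 ^ 2 - w p.2 ^ 2)| ≤ w p.1 ^ 2 + w p.2 ^ 2 := by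
      rw [abs_mul]
      calc |u p.2| * |w p.1 ^ 2 - w p.2 ^ 2| ≤ 1 * |w p.1 ^ 2 - w p.2 ^ 2| :=
            mul_le_mul_of_nonneg_right (hub p.2) (abs_nonneg _)
        _ = |w p.1 ^ 2 - w p.2 ^ 2| := one_mul _
        _ ≤ w p.1 ^ 2 + w p.2 ^ 2 := by
            rw [abs_le]; constructor <;> nlinarith [sq_nonneg (w p.1), sq_nonneg (w p.2)]
    calc |rf p| = b p.1 p.2 * (|u p.1 - u p.2| * |u p.2 * (w p.1 ^ 2 - w p.2 ^ 2)|) := by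
          simp only [hrf_def]; rw [abs_mul, abs_mul, abs_of_nonneg hB]; ring
      _ ≤ b p.1 p.2 * (2 * (w p.1 ^ 2 + w p.2 ^ 2)) := by
          apply mul_le_mul_of_nonneg_left _ hB
          have := mul_le_mul h1 h2 (abs_nonneg _) (by norm_num)
          linarith [this]
      _ = b p.1 p.2 * (2 * w p.1 ^ 2) + b p.1 p.2 * (2 * w p.2 ^ 2) := by ring
  have hrfsum : Summable rf :=
    summable_dom b hb_nonneg hb_symm hb_sum _ _ hwsq_fin2 (fun x => by positivity)
      hwsq_fin2 (fun x => by positivity) hrf_dom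
  set R := ∑' p : X × X, rf p with hR_def
  -- ef = af + rf pointwise
  have hsplit : ∀ p : X × X, ef p = af p + rf p := by
    intro p; simp only [hef_def, haf_def, hrf_def, hv₀_def]; ring
  have hE_split : (∑' p : X × X, ef p) = A + R := by
    rw [hA_def, hR_def, ← Summable.tsum_add hafsum hrfsum]
    exact tsum_congr hsplit
  -- the eigen-equation terms
  have hTsum : Summable (fun x => u x * v₀ x * m x) :=
    hfin _ (by intro x h; simp [hv₀_def, h])
  set T := ∑' x, u x * v₀ x * m x with hT_def
  have hT_ub : lam * T ≤ |lam| * S := by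
    have hT0 : 0 ≤ T := tsum_nonneg (fun x => by
      have : u x * v₀ x * m x = u x ^ 2 * w x ^ 2 * m x := by simp only [hv₀_def]; ring
      rw [this]; exact mul_nonneg (mul_nonneg (sq_nonneg _) (sq_nonneg _)) (hm x).le)
    have hTS : T ≤ S := by
      apply Summable.tsum_le_tsum _ hTsum hSsum
      intro x
      have : u x * v₀ x * m x = u x ^ 2 * (w x ^ 2 * m x) := by simp only [hv₀_def]; ring
      rw [this]
      calc u x ^ 2 * (w x ^ 2 * m x) ≤ 1 * (w x ^ 2 * m x) :=
            mul_le_mul_of_nonneg_right (hu2 x) (mul_nonneg (sq_nonneg _) (hm x).le)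
        _ = w x ^ 2 * m x := one_mul _
    calc lam * T ≤ |lam| * T := mul_le_mul_of_nonneg_right (le_abs_self lam) hT0
      _ ≤ |lam| * S := mul_le_mul_of_nonneg_left hTS (abs_nonneg _)
  have hWTsum : Summable (fun x => W x * u x * v₀ x * m x) :=
    hfin _ (by intro x h; simp [hv₀_def, h])
  set WT := ∑' x, W x * u x * v₀ x * m x with hWT_def
  have hWT_lb : -(M * S) ≤ WT := by
    rw [hWT_def, hS_def, ← tsum_mul_left, ← tsum_neg]
    apply Summable.tsum_le_tsum _ ((hSsum.mul_left M).neg) hWTsum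
    intro x
    have h := abs_le.mp (hWle x)
    have hP : 0 ≤ u x ^ 2 * w x ^ 2 * m x := mul_nonneg (mul_nonneg (sq_nonneg _) (sq_nonneg _)) (hm x).le
    have hshape : W x * u x * v₀ x * m x = W x * (u x ^ 2 * w x ^ 2 * m x) := by
      simp only [hv₀_def]; ring
    rw [hshape]
    have h1 : -M * (u x ^ 2 * w x ^ 2 * m x) ≤ W x * (u x ^ 2 * w x ^ 2 * m x) :=
      mul_le_mul_of_nonneg_right h.1 hP
    have h2 : u x ^ 2 * w x ^ 2 * m x ≤ w x ^ 2 * m x := by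
      calc u x ^ 2 * w x ^ 2 * m x = u x ^ 2 * (w x ^ 2 * m x) := by ring
        _ ≤ 1 * (w x ^ 2 * m x) :=
            mul_le_mul_of_nonneg_right (hu2 x) (mul_nonneg (sq_nonneg _) (hm x).le)
        _ = w x ^ 2 * m x := one_mul _
    have h3 := mul_le_mul_of_nonneg_left h2 hMnn
    linarith [h1, h3]
  -- the eigen-equation, in product form
  have heq := heig v₀ hv₀_fin
  have hE_iter : (∑' x, ∑' y, b x y * (u x - u y) * (v₀ x - v₀ y)) = ∑' p : X × X, ef p :=
    (Summable.tsum_prod hefsum).symm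
  rw [hE_iter, hE_split] at heq
  -- so A = lam * T - WT - R
  have hA_eq : A = lam * T - WT - R := by rw [← hT_def, ← hWT_def] at heq; linarith [heq]
  -- the symmetric version of A
  set af' : X × X → ℝ := fun p => w p.2 ^ 2 * b p.1 p.2 * (u p.1 - u p.2) ^ 2 with haf'_def
  have haf'_eq : ∀ p : X × X, af ((Equiv.prodComm X X) p) = af' p := by
    intro p
    simp only [haf_def, haf'_def, Equiv.prodComm_apply, Prod.fst_swap, Prod.snd_swap]
    rw [hb_symm p.2 p.1]
    ring
  have haf'sum : Summable af' := by
    have := hafsum.comp_injective (Equiv.prodComm X X).injective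
    exact this.congr haf'_eq
  have hA'_eq : (∑' p : X × X, af' p) = A := by
    rw [hA_def, ← (Equiv.prodComm X X).tsum_eq af]
    exact tsum_congr fun p => (haf'_eq p).symm
  -- choose ε
  set c := |lam| + M with hc_def
  have hc0 : 0 ≤ c := add_nonneg (abs_nonneg _) hMnn
  set s := Real.sqrt (1 + c) with hs_def
  have hs_sq : s ^ 2 = 1 + c := Real.sq_sqrt (by linarith)
  have hs0 : 0 ≤ s := Real.sqrt_nonneg _
  have hs1 : 1 ≤ s := by
    have h := Real.sqrt_le_sqrt (show (1:ℝ) ≤ 1 + c by linarith)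
    rwa [Real.sqrt_one, ← hs_def] at h
  set ε : ℝ := 1 / (1 + s) with hε_def
  have hε : 0 < ε := by positivity
  -- bound |R|
  have hRbound : |R| ≤ ε/2 * A + ε/2 * A + 1/ε * Q := by
    have habs : |R| ≤ ∑' p : X × X, |rf p| := by
      simpa using norm_tsum_le_tsum_norm (f := rf) (by simpa using hrfsum.abs)
    have hpt : ∀ p : X × X, |rf p| ≤ ε/2 * af p + ε/2 * af' p + 1/ε * qf p := by
      intro p
      have := ptbound ε (b p.1 p.2) (u p.1 - u p.2) (w p.1) (w p.2) (u p.2) hε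
        (hb_nonneg p.1 p.2) (hub p.2)
      simpa only [hrf_def, haf_def, haf'_def, hqf_def] using this
    have hsum_rhs : Summable (fun p : X × X => ε/2 * af p + ε/2 * af' p + 1/ε * qf p) :=
      ((hafsum.mul_left _).add (haf'sum.mul_left _)).add (hqsum.mul_left _)
    calc |R| ≤ ∑' p : X × X, |rf p| := habs
      _ ≤ ∑' p : X × X, (ε/2 * af p + ε/2 * af' p + 1/ε * qf p) :=
          Summable.tsum_le_tsum hpt hrfsum.abs hsum_rhs
      _ = ε/2 * A + ε/2 * A + 1/ε * Q := by
          rw [Summable.tsum_add ((hafsum.mul_left _).add (haf'sum.mul_left _)) (hqsum.mul_left _),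
            Summable.tsum_add (hafsum.mul_left _) (haf'sum.mul_left _), tsum_mul_left, tsum_mul_left,
            tsum_mul_left, hA'_eq, ← hA_def, ← hQ_def]
  -- main inequality
  have hmain : A ≤ ε * A + 1/ε * Q + c * S := by
    have : A ≤ |lam| * S + M * S + |R| := by
      rw [hA_eq]
      have habsR : -R ≤ |R| := neg_le_abs R
      linarith [hT_ub, hWT_lb, habsR]
    calc A ≤ |lam| * S + M * S + |R| := this
      _ ≤ |lam| * S + M * S + (ε/2 * A + ε/2 * A + 1/ε * Q) := by linarith [hRbound]
      _ = ε * A + 1/ε * Q + c * S := by rw [hc_def]; ring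
  -- conclude
  have hone_s : (0:ℝ) < 1 + s := by linarith
  have hinv : 1/ε = 1 + s := by rw [hε_def]; field_simp
  have hεval : ε = 1/(1+s) := hε_def
  have hgoal : A ≤ (1 + s) ^ 2 := by
    have h' : (1 + s) * A ≤ (1 + s) * (ε * A + 1/ε * Q + c * S) :=
      mul_le_mul_of_nonneg_left hmain hone_s.le
    have hexp : (1 + s) * (ε * A + 1/ε * Q + c * S)
        = A + (1 + s)^2 * Q + (1 + s) * c * S := by
      rw [hinv, hεval]; field_simp
    rw [hexp] at h'
    have hq := mul_le_mul_of_nonneg_left hQ1 (sq_nonneg (1 + s))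
    have hcs := mul_le_mul_of_nonneg_left hS1 (mul_nonneg hone_s.le hc0)
    have hident : (1 + s) ^ 2 * 1 + (1 + s) * c * 1 = s * (1 + s) ^ 2 := by
      linear_combination (-(1 + s)) * hs_sq
    have hspos : (0:ℝ) < s := lt_of_lt_of_le one_pos hs1
    have hsa : s * A ≤ s * (1 + s) ^ 2 := by linarith [h', hq, hcs, hident]
    exact le_of_mul_le_mul_left hsa hspos
  calc A ≤ (1 + s) ^ 2 := hgoal
    _ = (1 + Real.sqrt (1 + |lam| + M)) ^ 2 := by
      rw [hs_def, hc_def, show 1 + (|lam| + M) = 1 + |lam| + M by ring]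

end CaccioppoliAux

/-- Extension of the discrete Caccioppoli-type estimate (Proposition 6.1) from finitely
supported test functions to all elements of the form domain, via Fatou's lemma: if `v` is
a pointwise limit of finitely supported functions `vₙ` with `‖vₙ‖_{Q_{b,W}} ≤ 1`, then
`Σ_{x,y} v(x)² b(x,y)(u(x) − u(y))² ≤ (1 + √(1 + |λ| + ‖W‖_∞))²` (the left-hand side being
a priori an extended-real sum). -/
theorem discrete_caccioppoli_form_domain {X : Type*} [Countable X]
    (m : X → ℝ) (hm : ∀ x, 0 < m x)
    (b : X → X → ℝ) (hb_nonneg : ∀ x y, 0 ≤ b x y) (hb_diag : ∀ x, b x x = 0)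
    (hb_symm : ∀ x y, b x y = b y x) (hb_sum : ∀ x, Summable fun y => b x y)
    (W : X → ℝ) (hWbd : BddAbove (Set.range fun x => |W x|))
    (M : ℝ) (hM : M = ⨆ x, |W x|)
    (lam : ℝ) (u : X → ℝ) (hub : ∀ x, |u x| ≤ 1)
    (heig : ∀ v₀ : X → ℝ, (Function.support v₀).Finite →
      (∑' x, ∑' y, b x y * (u x - u y) * (v₀ x - v₀ y)) + (∑' x, W x * u x * v₀ x * m x)
        = lam * ∑' x, u x * v₀ x * m x)
    (v : X → ℝ) (vn : ℕ → X → ℝ)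
    (hvn_fin : ∀ n, (Function.support (vn n)).Finite)
    (hvn_lim : ∀ x, Tendsto (fun n => vn n x) atTop (𝓝 (v x)))
    (hvn_norm : ∀ n,
      (∑' x, ∑' y, b x y * (vn n x - vn n y) ^ 2) + (∑' x, W x * vn n x ^ 2 * m x)
        + (1 + M) * (∑' x, vn n x ^ 2 * m x) ≤ 1) :
    (∑' x, ∑' y, ENNReal.ofReal (v x ^ 2 * b x y * (u x - u y) ^ 2))
      ≤ ENNReal.ofReal ((1 + Real.sqrt (1 + |lam| + M)) ^ 2) := by
    classical
  cases isEmpty_or_nonempty X with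
  | inl h =>
    simp [tsum_empty]
  | inr h =>
    obtain ⟨x₀⟩ := h
    have hMnn : 0 ≤ M := le_trans (abs_nonneg (W x₀)) (hM ▸ le_ciSup hWbd x₀)
    set r : ℝ := (1 + Real.sqrt (1 + |lam| + M)) ^ 2 with hr_def
    -- bound on each finite sum of the limit function
    have hfinset : ∀ F : Finset (X × X),
        (∑ p ∈ F, v p.1 ^ 2 * b p.1 p.2 * (u p.1 - u p.2) ^ 2) ≤ r := by
      intro F
      have hbound : ∀ n, (∑ p ∈ F, vn n p.1 ^ 2 * b p.1 p.2 * (u p.1 - u p.2) ^ 2) ≤ r := by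
        intro n
        have hkey := caccio_key m hm b hb_nonneg hb_symm hb_sum W hWbd M hM hMnn lam u hub heig
          (vn n) (hvn_fin n) (hvn_norm n)
        refine le_trans (Summable.sum_le_tsum F (fun p _ => ?_)
          (caccio_summable b hb_nonneg hb_symm hb_sum u hub (vn n) (hvn_fin n))) hkey
        exact mul_nonneg (mul_nonneg (sq_nonneg _) (hb_nonneg _ _)) (sq_nonneg _)
      have hlim : Tendsto (fun n => ∑ p ∈ F, vn n p.1 ^ 2 * b p.1 p.2 * (u p.1 - u p.2) ^ 2)
          atTop (𝓝 (∑ p ∈ F, v p.1 ^ 2 * b p.1 p.2 * (u p.1 - u p.2) ^ 2)) := by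
        apply tendsto_finset_sum
        intro p _
        exact (((hvn_lim p.1).pow 2).mul_const (b p.1 p.2)).mul_const ((u p.1 - u p.2) ^ 2)
      exact le_of_tendsto hlim (Eventually.of_forall hbound)
    -- pass to the ENNReal sum
    have hprod : (∑' x, ∑' y, ENNReal.ofReal (v x ^ 2 * b x y * (u x - u y) ^ 2))
        = ∑' p : X × X, ENNReal.ofReal (v p.1 ^ 2 * b p.1 p.2 * (u p.1 - u p.2) ^ 2) :=
      ENNReal.tsum_prod.symm
    rw [hprod, ENNReal.tsum_eq_iSup_sum]
    apply iSup_le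
    intro F
    have : (∑ p ∈ F, ENNReal.ofReal (v p.1 ^ 2 * b p.1 p.2 * (u p.1 - u p.2) ^ 2))
        = ENNReal.ofReal (∑ p ∈ F, v p.1 ^ 2 * b p.1 p.2 * (u p.1 - u p.2) ^ 2) := by
      rw [ENNReal.ofReal_sum_of_nonneg]
      intro p _
      exact mul_nonneg (mul_nonneg (sq_nonneg _) (hb_nonneg _ _)) (sq_nonneg _)
    rw [this]
    exact ENNReal.ofReal_le_ofReal (hfinset F)
end

section
/- Let X be a countable set, m : X → ℝ with m(x) > 0 for all x, and b : X × X → ℝ a symmetric weighted graph, i.e. b(x,y) ≥ 0, b(x,x) = 0, b(x,y) = b(y,x), and Σ_y b(x,y) < ∞ for every x. Let W : X → ℝ be bounded with ‖W‖_∞ := sup_x |W(x)|, let λ ∈ ℝ, and let u : X → ℝ with |u| ≤ 1 satisfy, for every finitely supported v₀ : X → ℝ, Σ_{x,y} b(x,y)(u(x) − u(y))(v₀(x) − v₀(y)) + Σ_x W(x)u(x)v₀(x)m(x) = λ Σ_x u(x)v₀(x)m(x). Let φ : X → ℝ be finitely supported with 0 ≤ φ ≤ 1 and ‖φu‖ :=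 (Σ_x φ(x)²u(x)²m(x))^{1/2} ≥ 1, and set w := φu/‖φu‖. Then for every finitely supported v : X → ℝ with Σ_{x,y} b(x,y)(v(x) − v(y))² + Σ_x W(x)v(x)²m(x) + (1 + ‖W‖_∞) Σ_x v(x)²m(x) ≤ 1, one has | Σ_{x,y} b(x,y)(w(x) − w(y))(v(x) − v(y)) + Σ_x W(x)w(x)v(x)m(x) − λ Σ_x w(x)v(x)m(x) | ≤ (2 + √(1 + |λ| + ‖W‖_∞)) · ( Σ_{x,y} b(x,y)(φ(x) − φ(y))² )^{1/2}. -/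
open Function

private lemma shnol_cs_tsum {ι : Type*} (f g : ι → ℝ)
    (hf : Summable fun i => f i ^ 2) (hg : Summable fun i => g i ^ 2) :
    ∑' i, |f i| * |g i| ≤ Real.sqrt (∑' i, f i ^ 2) * Real.sqrt (∑' i, g i ^ 2) := by
  have hsum : Summable fun i => |f i| * |g i| := by
    refine Summable.of_nonneg_of_le (fun i => mul_nonneg (abs_nonneg _) (abs_nonneg _))
      (fun i => ?_) ((hf.add hg).mul_left (1/2 : ℝ))
    have := sq_nonneg (|f i| - |g i|)
    have h1 : |f i| ^ 2 = f i ^ 2 := sq_abs _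
    have h2 : |g i| ^ 2 = g i ^ 2 := sq_abs _
    nlinarith
  have hA : (0:ℝ) ≤ ∑' i, f i ^ 2 := tsum_nonneg fun i => sq_nonneg _
  have hB : (0:ℝ) ≤ ∑' i, g i ^ 2 := tsum_nonneg fun i => sq_nonneg _
  refine Summable.tsum_le_of_sum_le hsum fun s => ?_
  have hcs := Finset.sum_mul_sq_le_sq_mul_sq s (fun i => |f i|) (fun i => |g i|)
  have hfs : ∑ i ∈ s, |f i| ^ 2 ≤ ∑' i, f i ^ 2 := by
    calc ∑ i ∈ s, |f i| ^ 2 = ∑ i ∈ s, f i ^ 2 := by simp [sq_abs]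
      _ ≤ ∑' i, f i ^ 2 := Summable.sum_le_tsum s (fun i _ => sq_nonneg _) hf
  have hgs : ∑ i ∈ s, |g i| ^ 2 ≤ ∑' i, g i ^ 2 := by
    calc ∑ i ∈ s, |g i| ^ 2 = ∑ i ∈ s, g i ^ 2 := by simp [sq_abs]
      _ ≤ ∑' i, g i ^ 2 := Summable.sum_le_tsum s (fun i _ => sq_nonneg _) hg
  have hss : (0:ℝ) ≤ ∑ i ∈ s, |f i| * |g i| :=
    Finset.sum_nonneg fun i _ => mul_nonneg (abs_nonneg _) (abs_nonneg _)
  have h2 : (∑ i ∈ s, |f i| * |g i|) ^ 2 ≤ (∑' i, f i ^ 2) * (∑' i, g i ^ 2) := by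
    refine hcs.trans ?_
    exact mul_le_mul hfs hgs (Finset.sum_nonneg fun i _ => sq_nonneg _) hA
  calc ∑ i ∈ s, |f i| * |g i| = Real.sqrt ((∑ i ∈ s, |f i| * |g i|) ^ 2) :=
        (Real.sqrt_sq hss).symm
    _ ≤ Real.sqrt ((∑' i, f i ^ 2) * (∑' i, g i ^ 2)) := Real.sqrt_le_sqrt h2
    _ = Real.sqrt (∑' i, f i ^ 2) * Real.sqrt (∑' i, g i ^ 2) := Real.sqrt_mul hA _

private lemma shnol_cs_abs {ι : Type*} (f g : ι → ℝ)
    (hf : Summable fun i => f i ^ 2) (hg : Summable fun i => g i ^ 2) :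
    |∑' i, f i * g i| ≤ Real.sqrt (∑' i, f i ^ 2) * Real.sqrt (∑' i, g i ^ 2) := by
  have hsum : Summable fun i => ‖f i * g i‖ := by
    simp only [norm_mul, Real.norm_eq_abs]
    refine Summable.of_nonneg_of_le (fun i => mul_nonneg (abs_nonneg _) (abs_nonneg _))
      (fun i => ?_) ((hf.add hg).mul_left (1/2 : ℝ))
    have := sq_nonneg (|f i| - |g i|)
    have h1 : |f i| ^ 2 = f i ^ 2 := sq_abs _
    have h2 : |g i| ^ 2 = g i ^ 2 := sq_abs _
    nlinarith
  calc |∑' i, f i * g i| ≤ ∑' i, ‖f i * g i‖ := by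
        simpa [Real.norm_eq_abs] using norm_tsum_le_tsum_norm hsum
    _ = ∑' i, |f i| * |g i| := by simp [abs_mul]
    _ ≤ _ := shnol_cs_tsum f g hf hg

private lemma shnol_sqrt_quad {S c : ℝ} (hS : 0 ≤ S) (h : S ≤ c + 2 * Real.sqrt S) :
    Real.sqrt S ≤ 1 + Real.sqrt (1 + c) := by
  set s := Real.sqrt S with hs_def
  have hs : 0 ≤ s := Real.sqrt_nonneg _
  have hs2 : s ^ 2 = S := Real.sq_sqrt hS
  have h1 : (s - 1) ^ 2 ≤ 1 + c := by nlinarith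
  have h2 : s - 1 ≤ Real.sqrt (1 + c) := by
    calc s - 1 ≤ |s - 1| := le_abs_self _
      _ = Real.sqrt ((s - 1) ^ 2) := (Real.sqrt_sq_eq_abs _).symm
      _ ≤ Real.sqrt (1 + c) := Real.sqrt_le_sqrt h1
  linarith

private lemma shnol_summable_cut {X : Type*} [Countable X] (b : X → X → ℝ)
    (hb_nonneg : ∀ x y, 0 ≤ b x y) (hb_symm : ∀ x y, b x y = b y x)
    (hb_sum : ∀ x, Summable fun y => b x y)
    (F : Finset X) (g : X → X → ℝ) (C : ℝ)
    (hC : ∀ x y, |g x y| ≤ C) (hg : ∀ x y, x ∉ F → y ∉ F → g x y = 0) :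
    Summable fun p : X × X => b p.1 p.2 * g p.1 p.2 := by
  classical
  set C' : ℝ := max C 0 with hC'
  have hC'0 : 0 ≤ C' := le_max_right _ _
  have hgC : ∀ x y, |g x y| ≤ C' := fun x y => (hC x y).trans (le_max_left _ _)
  set h1 : X × X → ℝ := fun p => if p.1 ∈ F then C' * b p.1 p.2 else 0 with hh1
  set h2 : X × X → ℝ := fun p => if p.2 ∈ F then C' * b p.1 p.2 else 0 with hh2
  have hsum1 : Summable h1 := by
    rw [summable_prod_of_nonneg (fun p => by
      by_cases hp : p.1 ∈ F <;> simp [hh1, hp, mul_nonneg hC'0 (hb_nonneg _ _)])]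
    constructor
    · intro x
      by_cases hx : x ∈ F
      · simpa [hh1, hx] using (hb_sum x).mul_left C'
      · simpa [hh1, hx] using summable_zero
    · apply summable_of_finite_support
      apply F.finite_toSet.subset
      intro x hx
      by_contra hxF
      apply hx
      have hxF' : x ∉ F := fun h => hxF (Finset.mem_coe.mpr h)
      simp [hh1, hxF']
  have hsum2 : Summable h2 := by
    rw [summable_prod_of_nonneg (fun p => by
      by_cases hp : p.2 ∈ F <;> simp [hh2, hp, mul_nonneg hC'0 (hb_nonneg _ _)])]
    constructor
    · intro x
      apply summable_of_finite_support
      apply F.finite_toSet.subset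
      intro y hy
      by_contra hyF
      apply hy
      have hyF' : y ∉ F := fun h => hyF (Finset.mem_coe.mpr h)
      simp [hh2, hyF']
    · have hre : ∀ x, (∑' y, h2 (x, y)) = ∑ y ∈ F, C' * b x y := by
        intro x
        rw [tsum_eq_sum (s := F) (fun y hy => by simp [hh2, hy])]
        exact Finset.sum_congr rfl fun y hy => by simp [hh2, hy]
      refine Summable.congr ?_ fun x => (hre x).symm
      refine summable_sum fun y _ => ?_
      have : (fun x => C' * b x y) = fun x => C' * b y x := by
        funext x; rw [hb_symm]
      rw [this]
      exact (hb_sum y).mul_left C'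
  rw [← summable_abs_iff]
  refine Summable.of_nonneg_of_le (fun p => abs_nonneg _) (fun p => ?_) (hsum1.add hsum2)
  rcases p with ⟨x, y⟩
  rw [abs_mul, abs_of_nonneg (hb_nonneg x y)]
  by_cases hx : x ∈ F
  · have : b x y * |g x y| ≤ C' * b x y := by
      calc b x y * |g x y| ≤ b x y * C' := by
            exact mul_le_mul_of_nonneg_left (hgC x y) (hb_nonneg x y)
        _ = C' * b x y := mul_comm _ _
    calc b x y * |g x y| ≤ C' * b x y := this
      _ ≤ h1 (x, y) + h2 (x, y) := by
        by_cases hy : y ∈ F <;>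
          simp [hh1, hh2, hx, hy, mul_nonneg hC'0 (hb_nonneg x y)]
  · by_cases hy : y ∈ F
    · have : b x y * |g x y| ≤ C' * b x y := by
        calc b x y * |g x y| ≤ b x y * C' :=
              mul_le_mul_of_nonneg_left (hgC x y) (hb_nonneg x y)
          _ = C' * b x y := mul_comm _ _
      calc b x y * |g x y| ≤ C' * b x y := this
        _ ≤ h1 (x, y) + h2 (x, y) := by
          simp [hh1, hh2, hx, hy, mul_nonneg hC'0 (hb_nonneg x y)]
    · simp [hg x y hx hy, hh1, hh2, hx, hy]

private lemma shnol_summable_absmul {ι : Type*} (f g : ι → ℝ)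
    (hf : Summable fun i => f i ^ 2) (hg : Summable fun i => g i ^ 2) :
    Summable fun i => |f i * g i| := by
  refine Summable.of_nonneg_of_le (fun i => abs_nonneg _)
    (fun i => ?_) ((hf.add hg).mul_left (1/2 : ℝ))
  rw [abs_mul]
  have := sq_nonneg (|f i| - |g i|)
  have h1 : |f i| ^ 2 = f i ^ 2 := sq_abs _
  have h2 : |g i| ^ 2 = g i ^ 2 := sq_abs _
  nlinarith

set_option maxHeartbeats 2000000 in


/-- Key quantitative estimate in the proof of the discrete Shnol-type theorem
(Proposition 6.2): for a generalized eigenfunction `u` of the graph Schrödinger operator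
`L + W` with `|u| ≤ 1`, a finitely supported cut-off `φ` with `0 ≤ φ ≤ 1` and `‖φu‖ ≥ 1`,
and `w = φu/‖φu‖`, one has
`|Q_{b,W}(w, v) − λ⟨w, v⟩| ≤ (2 + √(1 + |λ| + ‖W‖_∞)) · Q_b(φ, φ)^{1/2}` for every finitely
supported `v` with `‖v‖_{Q_{b,W}} ≤ 1`. -/
theorem discrete_weyl_sequence_estimate {X : Type*} [Countable X]
    (m : X → ℝ) (hm : ∀ x, 0 < m x)
    (b : X → X → ℝ) (hb_nonneg : ∀ x y, 0 ≤ b x y) (hb_diag : ∀ x, b x x = 0)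
    (hb_symm : ∀ x y, b x y = b y x) (hb_sum : ∀ x, Summable fun y => b x y)
    (W : X → ℝ) (hWbd : BddAbove (Set.range fun x => |W x|))
    (M : ℝ) (hM : M = ⨆ x, |W x|)
    (lam : ℝ) (u : X → ℝ) (hub : ∀ x, |u x| ≤ 1)
    (heig : ∀ v₀ : X → ℝ, (Function.support v₀).Finite →
      (∑' x, ∑' y, b x y * (u x - u y) * (v₀ x - v₀ y)) + (∑' x, W x * u x * v₀ x * m x)
        = lam * ∑' x, u x * v₀ x * m x)
    (φ : X → ℝ) (hφ_fin : (Function.support φ).Finite)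
    (hφ01 : ∀ x, 0 ≤ φ x ∧ φ x ≤ 1)
    (N : ℝ) (hN : N = Real.sqrt (∑' x, φ x ^ 2 * u x ^ 2 * m x)) (hN1 : 1 ≤ N)
    (w : X → ℝ) (hw : w = fun x => φ x * u x / N) :
    ∀ v : X → ℝ, (Function.support v).Finite →
      (∑' x, ∑' y, b x y * (v x - v y) ^ 2) + (∑' x, W x * v x ^ 2 * m x)
        + (1 + M) * (∑' x, v x ^ 2 * m x) ≤ 1 →
      |(∑' x, ∑' y, b x y * (w x - w y) * (v x - v y)) + (∑' x, W x * w x * v x * m x)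
          - lam * ∑' x, w x * v x * m x|
        ≤ (2 + Real.sqrt (1 + |lam| + M)) *
          Real.sqrt (∑' x, ∑' y, b x y * (φ x - φ y) ^ 2) := by
  intro v hv_fin hvle
  rcases isEmpty_or_nonempty X with hX | hX
  · simp [tsum_empty]
  classical
  obtain ⟨x₀⟩ := hX
  set F : Finset X := hφ_fin.toFinset ∪ hv_fin.toFinset with hF
  have hφF : ∀ x, x ∉ F → φ x = 0 := by
    intro x hx
    by_contra h
    exact hx (Finset.mem_union_left _ (hφ_fin.mem_toFinset.mpr h))
  have hvF : ∀ x, x ∉ F → v x = 0 := by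
    intro x hx
    by_contra h
    exact hx (Finset.mem_union_right _ (hv_fin.mem_toFinset.mpr h))
  set Cv : ℝ := ∑ x ∈ hv_fin.toFinset, |v x| with hCvdef
  have hCv0 : 0 ≤ Cv := Finset.sum_nonneg fun _ _ => abs_nonneg _
  have hvb : ∀ x, |v x| ≤ Cv := by
    intro x
    by_cases hx : v x = 0
    · simp [hx, hCv0]
    · exact Finset.single_le_sum (f := fun x => |v x|) (fun _ _ => abs_nonneg _)
        (hv_fin.mem_toFinset.mpr hx)
  have hWM : ∀ x, |W x| ≤ M := fun x => hM ▸ le_ciSup hWbd x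
  have hM0 : 0 ≤ M := le_trans (abs_nonneg _) (hWM x₀)
  have hN0 : 0 < N := lt_of_lt_of_le one_pos hN1
  have hNne : N ≠ 0 := hN0.ne'
  have hNinv1 : N⁻¹ ≤ 1 := by
    rw [inv_le_one_iff₀]; right; exact hN1
  have hNinv0 : 0 ≤ N⁻¹ := inv_nonneg.mpr hN0.le
  have hφb : ∀ x, |φ x| ≤ 1 := fun x => abs_le.mpr ⟨by linarith [(hφ01 x).1], (hφ01 x).2⟩
  have hu2 : ∀ x, u x ^ 2 ≤ 1 := by
    intro x
    have h := abs_le.mp (hub x)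
    nlinarith
  have hwx : ∀ x, w x = φ x * u x / N := fun x => by rw [hw]
  -- triangle-type helpers
  have tri : ∀ a c A : ℝ, |a| ≤ A → |c| ≤ A → |a - c| ≤ 2 * A := by
    intro a c A h1 h2
    calc |a - c| = |a + -c| := by rw [sub_eq_add_neg]
      _ ≤ |a| + |-c| := abs_add_le _ _
      _ = |a| + |c| := by rw [abs_neg]
      _ ≤ 2 * A := by linarith
  have pb : ∀ a c A C : ℝ, |a| ≤ A → |c| ≤ C → |a * c| ≤ A * C := by
    intro a c A C h1 h2
    rw [abs_mul]
    exact mul_le_mul h1 h2 (abs_nonneg _) ((abs_nonneg a).trans h1)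
  have hφub : ∀ x, |φ x * u x| ≤ 1 := by
    intro x
    have := pb (φ x) (u x) 1 1 (hφb x) (hub x)
    simpa using this
  have hφvb : ∀ x, |φ x * v x| ≤ Cv := by
    intro x
    have := pb (φ x) (v x) 1 Cv (hφb x) (hvb x)
    simpa using this
  have hv2b : ∀ x, |v x ^ 2| ≤ Cv ^ 2 := by
    intro x
    rw [abs_of_nonneg (sq_nonneg _), ← sq_abs]
    exact pow_le_pow_left₀ (abs_nonneg _) (hvb x) 2
  have hv2ub : ∀ x, |v x ^ 2 * u x| ≤ Cv ^ 2 := by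
    intro x
    have := pb (v x ^ 2) (u x) (Cv ^ 2) 1 (hv2b x) (hub x)
    simpa using this
  have hdu : ∀ x y, |u x - u y| ≤ 2 := fun x y => by
    have := tri (u x) (u y) 1 (hub x) (hub y); linarith
  have hdφ : ∀ x y, |φ x - φ y| ≤ 2 := fun x y => by
    have := tri (φ x) (φ y) 1 (hφb x) (hφb y); linarith
  have hdv : ∀ x y, |v x - v y| ≤ 2 * Cv := fun x y => tri _ _ _ (hvb x) (hvb y)
  have hdφu : ∀ x y, |φ x * u x - φ y * u y| ≤ 2 := fun x y => by
    have := tri (φ x * u x) (φ y * u y) 1 (hφub x) (hφub y); linarith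
  have hdφv : ∀ x y, |φ x * v x - φ y * v y| ≤ 2 * Cv :=
    fun x y => tri _ _ _ (hφvb x) (hφvb y)
  have hdv2u : ∀ x y, |v x ^ 2 * u x - v y ^ 2 * u y| ≤ 2 * Cv ^ 2 :=
    fun x y => tri _ _ _ (hv2ub x) (hv2ub y)
  have hdv2 : ∀ x y, |v x ^ 2 - v y ^ 2| ≤ 2 * Cv ^ 2 :=
    fun x y => tri _ _ _ (hv2b x) (hv2b y)
  -- iterated-sum/product-sum conversion
  have dbl : ∀ P : X × X → ℝ, Summable P → (∑' x, ∑' y, P (x, y)) = ∑' p : X × X, P p :=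
    fun P hP => (Summable.tsum_prod' hP fun x => hP.prod_factor x).symm
  have cut : ∀ (g : X → X → ℝ) (C : ℝ), (∀ x y, |g x y| ≤ C) →
      (∀ x y, x ∉ F → y ∉ F → g x y = 0) →
      Summable fun p : X × X => b p.1 p.2 * g p.1 p.2 :=
    fun g C h1 h2 => shnol_summable_cut b hb_nonneg hb_symm hb_sum F g C h1 h2
  have fs : ∀ f : X → ℝ, (∀ x, x ∉ F → f x = 0) → Summable f := by
    intro f hf
    refine summable_of_finite_support (F.finite_toSet.subset fun x hx => ?_)
    by_contra h
    exact hx (hf x fun hmem => h (Finset.mem_coe.mpr hmem))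
  -- product summability facts
  have hSP1 : Summable fun p : X × X =>
      b p.1 p.2 * ((φ p.1 * u p.1 - φ p.2 * u p.2) * (v p.1 - v p.2)) := by
    refine cut (fun x y => (φ x * u x - φ y * u y) * (v x - v y)) (2 * (2 * Cv)) (fun x y => ?_) (fun x y hx hy => by
      simp [hvF x hx, hvF y hy])
    exact pb _ _ 2 (2 * Cv) (hdφu x y) (hdv x y)
  have hSP2 : Summable fun p : X × X =>
      b p.1 p.2 * ((u p.1 - u p.2) * (φ p.1 * v p.1 - φ p.2 * v p.2)) := by
    refine cut (fun x y => (u x - u y) * (φ x * v x - φ y * v y)) (2 * (2 * Cv)) (fun x y => ?_) (fun x y hx hy => by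
      simp [hφF x hx, hφF y hy, hvF x hx, hvF y hy])
    exact pb _ _ 2 (2 * Cv) (hdu x y) (hdφv x y)
  have hST1 : Summable fun p : X × X =>
      b p.1 p.2 * ((φ p.1 - φ p.2) * (u p.2 * (v p.1 - v p.2))) := by
    refine cut (fun x y => (φ x - φ y) * (u y * (v x - v y))) (2 * (1 * (2 * Cv))) (fun x y => ?_) (fun x y hx hy => by
      simp [hφF x hx, hφF y hy])
    exact pb _ _ 2 (1 * (2 * Cv)) (hdφ x y) (pb _ _ 1 (2 * Cv) (hub y) (hdv x y))
  have hST2 : Summable fun p : X × X =>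
      b p.1 p.2 * ((φ p.1 - φ p.2) * (v p.2 * (u p.2 - u p.1))) := by
    refine cut (fun x y => (φ x - φ y) * (v y * (u y - u x))) (2 * (Cv * 2)) (fun x y => ?_) (fun x y hx hy => by
      simp [hφF x hx, hφF y hy])
    exact pb _ _ 2 (Cv * 2) (hdφ x y) (pb _ _ Cv 2 (hvb y) (hdu y x))
  have hST2' : Summable fun p : X × X =>
      b p.1 p.2 * ((φ p.1 - φ p.2) * (v p.1 * (u p.1 - u p.2))) := by
    refine cut (fun x y => (φ x - φ y) * (v x * (u x - u y))) (2 * (Cv * 2)) (fun x y => ?_) (fun x y hx hy => by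
      simp [hφF x hx, hφF y hy])
    exact pb _ _ 2 (Cv * 2) (hdφ x y) (pb _ _ Cv 2 (hvb x) (hdu x y))
  have hSQφ : Summable fun p : X × X => b p.1 p.2 * (φ p.1 - φ p.2) ^ 2 := by
    refine cut (fun x y => (φ x - φ y) ^ 2) 4 (fun x y => ?_) (fun x y hx hy => by simp [hφF x hx, hφF y hy])
    beta_reduce
    rw [abs_of_nonneg (sq_nonneg _), ← sq_abs]
    nlinarith [hdφ x y, abs_nonneg (φ x - φ y)]
  have hSQv : Summable fun p : X × X => b p.1 p.2 * (v p.1 - v p.2) ^ 2 := by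
    refine cut (fun x y => (v x - v y) ^ 2) ((2 * Cv) ^ 2) (fun x y => ?_) (fun x y hx hy => by
      simp [hvF x hx, hvF y hy])
    beta_reduce
    rw [abs_of_nonneg (sq_nonneg _), ← sq_abs]
    exact pow_le_pow_left₀ (abs_nonneg _) (hdv x y) 2
  have hSS : Summable fun p : X × X =>
      b p.1 p.2 * (v p.1 ^ 2 * (u p.1 - u p.2) ^ 2) := by
    refine cut (fun x y => v x ^ 2 * (u x - u y) ^ 2) (Cv ^ 2 * 2 ^ 2) (fun x y => ?_) (fun x y hx hy => by
      simp [hvF x hx])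
    beta_reduce
    refine pb _ _ (Cv ^ 2) (2 ^ 2) (hv2b x) ?_
    rw [abs_of_nonneg (sq_nonneg _), ← sq_abs]
    exact pow_le_pow_left₀ (abs_nonneg _) (hdu x y) 2
  have hSS2 : Summable fun p : X × X =>
      b p.1 p.2 * (v p.2 ^ 2 * (u p.1 - u p.2) ^ 2) := by
    refine cut (fun x y => v y ^ 2 * (u x - u y) ^ 2) (Cv ^ 2 * 2 ^ 2) (fun x y => ?_) (fun x y hx hy => by
      simp [hvF y hy])
    beta_reduce
    refine pb _ _ (Cv ^ 2) (2 ^ 2) (hv2b y) ?_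
    rw [abs_of_nonneg (sq_nonneg _), ← sq_abs]
    exact pow_le_pow_left₀ (abs_nonneg _) (hdu x y) 2
  have hSφ2 : Summable fun p : X × X =>
      b p.1 p.2 * ((φ p.1 - φ p.2) * u p.2) ^ 2 := by
    refine cut (fun x y => ((φ x - φ y) * u y) ^ 2) (2 ^ 2) (fun x y => ?_) (fun x y hx hy => by
      simp [hφF x hx, hφF y hy])
    beta_reduce
    rw [abs_of_nonneg (sq_nonneg _), ← sq_abs]
    refine pow_le_pow_left₀ (abs_nonneg _) ?_ 2
    have := pb _ _ 2 1 (hdφ x y) (hub y)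
    simpa using this
  have hSC : Summable fun p : X × X =>
      b p.1 p.2 * ((u p.1 - u p.2) * (v p.1 ^ 2 * u p.1 - v p.2 ^ 2 * u p.2)) := by
    refine cut (fun x y => (u x - u y) * (v x ^ 2 * u x - v y ^ 2 * u y)) (2 * (2 * Cv ^ 2)) (fun x y => ?_) (fun x y hx hy => by
      simp [hvF x hx, hvF y hy])
    exact pb _ _ 2 (2 * Cv ^ 2) (hdu x y) (hdv2u x y)
  have hSR : Summable fun p : X × X =>
      b p.1 p.2 * ((u p.1 - u p.2) * (u p.2 * (v p.1 ^ 2 - v p.2 ^ 2))) := by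
    refine cut (fun x y => (u x - u y) * (u y * (v x ^ 2 - v y ^ 2))) (2 * (1 * (2 * Cv ^ 2))) (fun x y => ?_) (fun x y hx hy => by
      simp [hvF x hx, hvF y hy])
    exact pb _ _ 2 (1 * (2 * Cv ^ 2)) (hdu x y) (pb _ _ 1 (2 * Cv ^ 2) (hub y) (hdv2 x y))
  -- abbreviations
  set T1 : ℝ := ∑' p : X × X, b p.1 p.2 * ((φ p.1 - φ p.2) * (u p.2 * (v p.1 - v p.2))) with hT1def
  set T2 : ℝ := ∑' p : X × X, b p.1 p.2 * ((φ p.1 - φ p.2) * (v p.2 * (u p.2 - u p.1))) with hT2def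
  set Qφ : ℝ := ∑' p : X × X, b p.1 p.2 * (φ p.1 - φ p.2) ^ 2 with hQφdef
  set Qv : ℝ := ∑' p : X × X, b p.1 p.2 * (v p.1 - v p.2) ^ 2 with hQvdef
  set S : ℝ := ∑' p : X × X, b p.1 p.2 * (v p.1 ^ 2 * (u p.1 - u p.2) ^ 2) with hSdef
  set R : ℝ := ∑' p : X × X, b p.1 p.2 * ((u p.1 - u p.2) * (u p.2 * (v p.1 ^ 2 - v p.2 ^ 2))) with hRdef
  have hQφ0 : 0 ≤ Qφ := tsum_nonneg fun p => mul_nonneg (hb_nonneg _ _) (sq_nonneg _)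
  have hQv0 : 0 ≤ Qv := tsum_nonneg fun p => mul_nonneg (hb_nonneg _ _) (sq_nonneg _)
  have hS0 : 0 ≤ S := tsum_nonneg fun p =>
    mul_nonneg (hb_nonneg _ _) (mul_nonneg (sq_nonneg _) (sq_nonneg _))
  -- single-sum summability
  have hvm_sum : Summable fun x => v x ^ 2 * m x := fs _ fun x hx => by simp [hvF x hx]
  have hWv_sum : Summable fun x => W x * v x ^ 2 * m x := fs _ fun x hx => by simp [hvF x hx]
  -- constraint consequences
  have hQv_eq : (∑' x, ∑' y, b x y * (v x - v y) ^ 2) = Qv := dbl _ hSQv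
  have hpos : 0 ≤ (∑' x, W x * v x ^ 2 * m x) + M * (∑' x, v x ^ 2 * m x) := by
    rw [← tsum_mul_left, ← Summable.tsum_add hWv_sum (hvm_sum.mul_left M)]
    refine tsum_nonneg fun x => ?_
    have h1 := (abs_le.mp (hWM x)).1
    nlinarith [mul_nonneg (sq_nonneg (v x)) (hm x).le]
  have hvm0 : 0 ≤ ∑' x, v x ^ 2 * m x :=
    tsum_nonneg fun x => mul_nonneg (sq_nonneg _) (hm x).le
  have hQv1 : Qv ≤ 1 := by rw [hQv_eq] at hvle; linarith
  have hvm1 : (∑' x, v x ^ 2 * m x) ≤ 1 := by rw [hQv_eq] at hvle; linarith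
  have hsqQv : Real.sqrt Qv ≤ 1 := by
    rw [show (1 : ℝ) = Real.sqrt 1 by rw [Real.sqrt_one]]
    exact Real.sqrt_le_sqrt hQv1
  -- first eigenvalue equation with cutoff φ v
  have hsupp1 : (Function.support fun x => φ x * v x).Finite := by
    refine hφ_fin.subset fun x hx => ?_
    simp only [Function.mem_support] at hx ⊢
    exact fun h => hx (by rw [h, zero_mul])
  have hP2eq : (∑' x, ∑' y, b x y * (u x - u y) * (φ x * v x - φ y * v y))
      = ∑' p : X × X, b p.1 p.2 * ((u p.1 - u p.2) * (φ p.1 * v p.1 - φ p.2 * v p.2)) := by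
    calc (∑' x, ∑' y, b x y * (u x - u y) * (φ x * v x - φ y * v y))
        = ∑' x, ∑' y, (fun p : X × X =>
            b p.1 p.2 * ((u p.1 - u p.2) * (φ p.1 * v p.1 - φ p.2 * v p.2))) (x, y) :=
          tsum_congr fun x => tsum_congr fun y => by beta_reduce; ring
      _ = _ := dbl _ hSP2
  have hEig1 : (∑' p : X × X, b p.1 p.2 * ((u p.1 - u p.2) * (φ p.1 * v p.1 - φ p.2 * v p.2)))
      + (∑' x, W x * (φ x * u x) * v x * m x) = lam * ∑' x, (φ x * u x) * v x * m x := by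
    have h0 : (∑' x, ∑' y, b x y * (u x - u y) * (φ x * v x - φ y * v y))
        + (∑' x, W x * u x * (φ x * v x) * m x) = lam * ∑' x, u x * (φ x * v x) * m x :=
      heig (fun x => φ x * v x) hsupp1
    rw [hP2eq] at h0
    have hB'eq : (∑' x, W x * u x * (φ x * v x) * m x)
        = ∑' x, W x * (φ x * u x) * v x * m x := tsum_congr fun x => by ring
    have hC'eq : (∑' x, u x * (φ x * v x) * m x)
        = ∑' x, (φ x * u x) * v x * m x := tsum_congr fun x => by ring
    rw [hB'eq, hC'eq] at h0
    exact h0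
  -- main algebraic identity
  have hD : (∑' p : X × X, b p.1 p.2 * ((φ p.1 * u p.1 - φ p.2 * u p.2) * (v p.1 - v p.2)))
      + (∑' x, W x * (φ x * u x) * v x * m x) - lam * (∑' x, (φ x * u x) * v x * m x)
      = T1 + T2 := by
    have hsub : (∑' p : X × X, b p.1 p.2 * ((φ p.1 * u p.1 - φ p.2 * u p.2) * (v p.1 - v p.2)))
        - (∑' p : X × X, b p.1 p.2 * ((u p.1 - u p.2) * (φ p.1 * v p.1 - φ p.2 * v p.2)))
        = T1 + T2 := by
      rw [← Summable.tsum_sub hSP1 hSP2]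
      calc (∑' p : X × X, (b p.1 p.2 * ((φ p.1 * u p.1 - φ p.2 * u p.2) * (v p.1 - v p.2))
              - b p.1 p.2 * ((u p.1 - u p.2) * (φ p.1 * v p.1 - φ p.2 * v p.2))))
          = ∑' p : X × X, (b p.1 p.2 * ((φ p.1 - φ p.2) * (u p.2 * (v p.1 - v p.2)))
              + b p.1 p.2 * ((φ p.1 - φ p.2) * (v p.2 * (u p.2 - u p.1)))) :=
            tsum_congr fun p => by ring
        _ = T1 + T2 := Summable.tsum_add hST1 hST2
    linarith [hEig1]
  -- Cauchy-Schwarz for T1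
  have hT1bd : |T1| ≤ Real.sqrt Qφ * Real.sqrt Qv := by
    set f1 : X × X → ℝ := fun p => Real.sqrt (b p.1 p.2) * ((φ p.1 - φ p.2) * u p.2) with hf1
    set g0 : X × X → ℝ := fun p => Real.sqrt (b p.1 p.2) * (v p.1 - v p.2) with hg0
    have hf1sq : ∀ p : X × X, f1 p ^ 2 = b p.1 p.2 * ((φ p.1 - φ p.2) * u p.2) ^ 2 :=
      fun p => by rw [hf1]; beta_reduce; rw [mul_pow, Real.sq_sqrt (hb_nonneg _ _)]
    have hg0sq : ∀ p : X × X, g0 p ^ 2 = b p.1 p.2 * (v p.1 - v p.2) ^ 2 :=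
      fun p => by rw [hg0]; beta_reduce; rw [mul_pow, Real.sq_sqrt (hb_nonneg _ _)]
    have hSf1 : Summable fun p => f1 p ^ 2 := by
      refine Summable.congr hSφ2 fun p => (hf1sq p).symm
    have hSg0 : Summable fun p => g0 p ^ 2 := by
      refine Summable.congr hSQv fun p => (hg0sq p).symm
    have hcs := shnol_cs_abs f1 g0 hSf1 hSg0
    have he : T1 = ∑' p, f1 p * g0 p := by
      refine tsum_congr fun p => ?_
      have hb' := Real.mul_self_sqrt (hb_nonneg p.1 p.2)
      rw [hf1, hg0]; beta_reduce
      rw [show Real.sqrt (b p.1 p.2) * ((φ p.1 - φ p.2) * u p.2)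
          * (Real.sqrt (b p.1 p.2) * (v p.1 - v p.2))
          = (Real.sqrt (b p.1 p.2) * Real.sqrt (b p.1 p.2))
            * (((φ p.1 - φ p.2) * u p.2) * (v p.1 - v p.2)) from by ring, hb']
      ring
    have hm1 : (∑' p, f1 p ^ 2) ≤ Qφ := by
      refine Summable.tsum_le_tsum (fun p => ?_) hSf1 hSQφ
      rw [hf1sq p]
      have hu2' : u p.2 ^ 2 ≤ 1 := hu2 p.2
      calc b p.1 p.2 * ((φ p.1 - φ p.2) * u p.2) ^ 2
          = b p.1 p.2 * ((φ p.1 - φ p.2) ^ 2 * u p.2 ^ 2) := by rw [mul_pow]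
        _ ≤ b p.1 p.2 * ((φ p.1 - φ p.2) ^ 2 * 1) :=
            mul_le_mul_of_nonneg_left
              (mul_le_mul_of_nonneg_left hu2' (sq_nonneg _)) (hb_nonneg _ _)
        _ = b p.1 p.2 * (φ p.1 - φ p.2) ^ 2 := by ring
    have hg0Qv : (∑' p, g0 p ^ 2) = Qv := tsum_congr fun p => hg0sq p
    calc |T1| = |∑' p, f1 p * g0 p| := by rw [he]
      _ ≤ Real.sqrt (∑' p, f1 p ^ 2) * Real.sqrt (∑' p, g0 p ^ 2) := hcs
      _ = Real.sqrt (∑' p, f1 p ^ 2) * Real.sqrt Qv := by rw [hg0Qv]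
      _ ≤ Real.sqrt Qφ * Real.sqrt Qv :=
          mul_le_mul_of_nonneg_right (Real.sqrt_le_sqrt hm1) (Real.sqrt_nonneg _)
  -- swap identity for T2
  have hswap : T2 = - ∑' p : X × X, b p.1 p.2 * ((φ p.1 - φ p.2) * (v p.1 * (u p.1 - u p.2))) := by
    have h := (Equiv.prodComm X X).tsum_eq
      (fun p : X × X => b p.1 p.2 * ((φ p.1 - φ p.2) * (v p.2 * (u p.2 - u p.1))))
    calc T2 = ∑' c : X × X, b c.2 c.1 * ((φ c.2 - φ c.1) * (v c.1 * (u c.1 - u c.2))) := h.symm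
      _ = ∑' c : X × X, - (b c.1 c.2 * ((φ c.1 - φ c.2) * (v c.1 * (u c.1 - u c.2)))) := by
          refine tsum_congr fun c => ?_
          rw [hb_symm c.2 c.1]; ring
      _ = - ∑' p : X × X, b p.1 p.2 * ((φ p.1 - φ p.2) * (v p.1 * (u p.1 - u p.2))) := tsum_neg
  -- Cauchy-Schwarz for T2
  have hT2bd : |T2| ≤ Real.sqrt Qφ * Real.sqrt S := by
    set f2 : X × X → ℝ := fun p => Real.sqrt (b p.1 p.2) * (φ p.1 - φ p.2) with hf2
    set g2 : X × X → ℝ := fun p => Real.sqrt (b p.1 p.2) * (v p.1 * (u p.1 - u p.2)) with hg2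
    have hf2sq : ∀ p : X × X, f2 p ^ 2 = b p.1 p.2 * (φ p.1 - φ p.2) ^ 2 :=
      fun p => by rw [hf2]; beta_reduce; rw [mul_pow, Real.sq_sqrt (hb_nonneg _ _)]
    have hg2sq : ∀ p : X × X, g2 p ^ 2 = b p.1 p.2 * (v p.1 ^ 2 * (u p.1 - u p.2) ^ 2) :=
      fun p => by
        rw [hg2]; beta_reduce; rw [mul_pow, Real.sq_sqrt (hb_nonneg _ _)]; ring
    have hSf2 : Summable fun p => f2 p ^ 2 := Summable.congr hSQφ fun p => (hf2sq p).symm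
    have hSg2 : Summable fun p => g2 p ^ 2 := Summable.congr hSS fun p => (hg2sq p).symm
    have hcs := shnol_cs_abs f2 g2 hSf2 hSg2
    have he : (∑' p : X × X, b p.1 p.2 * ((φ p.1 - φ p.2) * (v p.1 * (u p.1 - u p.2))))
        = ∑' p, f2 p * g2 p := by
      refine tsum_congr fun p => ?_
      have hb' := Real.mul_self_sqrt (hb_nonneg p.1 p.2)
      rw [hf2, hg2]; beta_reduce
      rw [show Real.sqrt (b p.1 p.2) * (φ p.1 - φ p.2)
          * (Real.sqrt (b p.1 p.2) * (v p.1 * (u p.1 - u p.2)))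
          = (Real.sqrt (b p.1 p.2) * Real.sqrt (b p.1 p.2))
            * ((φ p.1 - φ p.2) * (v p.1 * (u p.1 - u p.2))) from by ring, hb']
    have hfQφ : (∑' p, f2 p ^ 2) = Qφ := tsum_congr fun p => hf2sq p
    have hgS : (∑' p, g2 p ^ 2) = S := tsum_congr fun p => hg2sq p
    rw [hswap, abs_neg, he]
    calc |∑' p, f2 p * g2 p|
        ≤ Real.sqrt (∑' p, f2 p ^ 2) * Real.sqrt (∑' p, g2 p ^ 2) := hcs
      _ = Real.sqrt Qφ * Real.sqrt S := by rw [hfQφ, hgS]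
  -- Caccioppoli estimate: second eigenvalue equation with cutoff v² u
  have hsupp2 : (Function.support fun x => v x ^ 2 * u x).Finite := by
    refine hv_fin.subset fun x hx => ?_
    simp only [Function.mem_support] at hx ⊢
    exact fun h => hx (by rw [h]; ring)
  have hPCeq : (∑' x, ∑' y, b x y * (u x - u y) * (v x ^ 2 * u x - v y ^ 2 * u y))
      = ∑' p : X × X, b p.1 p.2 * ((u p.1 - u p.2) * (v p.1 ^ 2 * u p.1 - v p.2 ^ 2 * u p.2)) := by
    calc (∑' x, ∑' y, b x y * (u x - u y) * (v x ^ 2 * u x - v y ^ 2 * u y))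
        = ∑' x, ∑' y, (fun p : X × X =>
            b p.1 p.2 * ((u p.1 - u p.2) * (v p.1 ^ 2 * u p.1 - v p.2 ^ 2 * u p.2))) (x, y) :=
          tsum_congr fun x => tsum_congr fun y => by beta_reduce; ring
      _ = _ := dbl _ hSC
  have hEig2 : (∑' p : X × X, b p.1 p.2 * ((u p.1 - u p.2) * (v p.1 ^ 2 * u p.1 - v p.2 ^ 2 * u p.2)))
      + (∑' x, W x * u x * (v x ^ 2 * u x) * m x) = lam * ∑' x, u x * (v x ^ 2 * u x) * m x := by
    have h0 : (∑' x, ∑' y, b x y * (u x - u y) * (v x ^ 2 * u x - v y ^ 2 * u y))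
        + (∑' x, W x * u x * (v x ^ 2 * u x) * m x) = lam * ∑' x, u x * (v x ^ 2 * u x) * m x :=
      heig (fun x => v x ^ 2 * u x) hsupp2
    rw [hPCeq] at h0
    exact h0
  have hCsplit : (∑' p : X × X, b p.1 p.2
      * ((u p.1 - u p.2) * (v p.1 ^ 2 * u p.1 - v p.2 ^ 2 * u p.2))) = S + R := by
    calc (∑' p : X × X, b p.1 p.2
        * ((u p.1 - u p.2) * (v p.1 ^ 2 * u p.1 - v p.2 ^ 2 * u p.2)))
        = ∑' p : X × X, (b p.1 p.2 * (v p.1 ^ 2 * (u p.1 - u p.2) ^ 2)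
            + b p.1 p.2 * ((u p.1 - u p.2) * (u p.2 * (v p.1 ^ 2 - v p.2 ^ 2)))) :=
          tsum_congr fun p => by ring
      _ = S + R := Summable.tsum_add hSS hSR
  -- bounds for the zero-order terms
  have hA2sum : Summable fun x => u x * (v x ^ 2 * u x) * m x := fs _ fun x hx => by
    simp [hvF x hx]
  have hA2le : (∑' x, u x * (v x ^ 2 * u x) * m x) ≤ ∑' x, v x ^ 2 * m x := by
    refine Summable.tsum_le_tsum (fun x => ?_) hA2sum hvm_sum
    nlinarith [mul_nonneg (mul_nonneg (sq_nonneg (v x)) (hm x).le)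
      (by linarith [hu2 x] : (0:ℝ) ≤ 1 - u x ^ 2)]
  have hA2nn : 0 ≤ ∑' x, u x * (v x ^ 2 * u x) * m x := by
    refine tsum_nonneg fun x => ?_
    calc (0:ℝ) ≤ (u x * v x) ^ 2 * m x := mul_nonneg (sq_nonneg _) (hm x).le
      _ = u x * (v x ^ 2 * u x) * m x := by ring
  have hA2bd : |∑' x, u x * (v x ^ 2 * u x) * m x| ≤ 1 :=
    abs_le.mpr ⟨by linarith, by linarith⟩
  have hB2absum : Summable fun x => |W x * u x * (v x ^ 2 * u x) * m x| := fs _ fun x hx => by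
    simp [hvF x hx]
  have hB2sum : Summable fun x => W x * u x * (v x ^ 2 * u x) * m x :=
    (summable_abs_iff (f := fun x => W x * u x * (v x ^ 2 * u x) * m x)).mp hB2absum
  have hB2bd : |∑' x, W x * u x * (v x ^ 2 * u x) * m x| ≤ M := by
    calc |∑' x, W x * u x * (v x ^ 2 * u x) * m x|
        ≤ ∑' x, |W x * u x * (v x ^ 2 * u x) * m x| := by
          have h := norm_tsum_le_tsum_norm
            (f := fun x => W x * u x * (v x ^ 2 * u x) * m x)
            (by simpa only [Real.norm_eq_abs] using hB2absum)
          simpa only [Real.norm_eq_abs] using h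
      _ ≤ ∑' x, M * (v x ^ 2 * m x) := by
          refine Summable.tsum_le_tsum (fun x => ?_) hB2absum (hvm_sum.mul_left M)
          rw [show W x * u x * (v x ^ 2 * u x) * m x = W x * ((u x * v x) ^ 2 * m x) from by
            ring, abs_mul, abs_of_nonneg (mul_nonneg (sq_nonneg (u x * v x)) (hm x).le)]
          have h1 : (u x * v x) ^ 2 * m x ≤ v x ^ 2 * m x := by
            nlinarith [mul_nonneg (mul_nonneg (sq_nonneg (v x)) (hm x).le)
              (by linarith [hu2 x] : (0:ℝ) ≤ 1 - u x ^ 2)]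
          exact mul_le_mul (hWM x) h1 (mul_nonneg (sq_nonneg _) (hm x).le) hM0
      _ = M * ∑' x, v x ^ 2 * m x := tsum_mul_left
      _ ≤ M := by nlinarith
  -- bound |R| ≤ 2 √S
  have hRbd : |R| ≤ 2 * Real.sqrt S := by
    set f3 : X × X → ℝ := fun p => Real.sqrt (b p.1 p.2) * (v p.1 * (u p.1 - u p.2)) with hf3
    set f4 : X × X → ℝ := fun p => Real.sqrt (b p.1 p.2) * (v p.2 * (u p.1 - u p.2)) with hf4
    set g0 : X × X → ℝ := fun p => Real.sqrt (b p.1 p.2) * (v p.1 - v p.2) with hg0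
    have hf3sq : ∀ p : X × X, f3 p ^ 2 = b p.1 p.2 * (v p.1 ^ 2 * (u p.1 - u p.2) ^ 2) :=
      fun p => by rw [hf3]; beta_reduce; rw [mul_pow, Real.sq_sqrt (hb_nonneg _ _)]; ring
    have hf4sq : ∀ p : X × X, f4 p ^ 2 = b p.1 p.2 * (v p.2 ^ 2 * (u p.1 - u p.2) ^ 2) :=
      fun p => by rw [hf4]; beta_reduce; rw [mul_pow, Real.sq_sqrt (hb_nonneg _ _)]; ring
    have hg0sq : ∀ p : X × X, g0 p ^ 2 = b p.1 p.2 * (v p.1 - v p.2) ^ 2 :=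
      fun p => by rw [hg0]; beta_reduce; rw [mul_pow, Real.sq_sqrt (hb_nonneg _ _)]
    have hSf3 : Summable fun p => f3 p ^ 2 := Summable.congr hSS fun p => (hf3sq p).symm
    have hSf4 : Summable fun p => f4 p ^ 2 := Summable.congr hSS2 fun p => (hf4sq p).symm
    have hSg0 : Summable fun p => g0 p ^ 2 := Summable.congr hSQv fun p => (hg0sq p).symm
    have hf4S : (∑' p, f4 p ^ 2) = S := by
      have h := (Equiv.prodComm X X).tsum_eq
        (fun p : X × X => b p.1 p.2 * (v p.2 ^ 2 * (u p.1 - u p.2) ^ 2))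
      calc (∑' p, f4 p ^ 2)
          = ∑' p : X × X, b p.1 p.2 * (v p.2 ^ 2 * (u p.1 - u p.2) ^ 2) :=
            tsum_congr fun p => hf4sq p
        _ = ∑' c : X × X, b c.2 c.1 * (v c.1 ^ 2 * (u c.2 - u c.1) ^ 2) := h.symm
        _ = S := by
            refine tsum_congr fun c => ?_
            rw [hb_symm c.2 c.1]; ring
    have hf3S : (∑' p, f3 p ^ 2) = S := tsum_congr fun p => hf3sq p
    have hg0Qv : (∑' p, g0 p ^ 2) = Qv := tsum_congr fun p => hg0sq p
    have key : ∀ p : X × X,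
        |b p.1 p.2 * ((u p.1 - u p.2) * (u p.2 * (v p.1 ^ 2 - v p.2 ^ 2)))|
          ≤ |f3 p * g0 p| + |f4 p * g0 p| := by
      intro p
      have hb' := Real.mul_self_sqrt (hb_nonneg p.1 p.2)
      have e3 : f3 p * g0 p
          = b p.1 p.2 * ((v p.1 * (u p.1 - u p.2)) * (v p.1 - v p.2)) := by
        rw [hf3, hg0]; beta_reduce
        rw [show Real.sqrt (b p.1 p.2) * (v p.1 * (u p.1 - u p.2))
            * (Real.sqrt (b p.1 p.2) * (v p.1 - v p.2))
            = (Real.sqrt (b p.1 p.2) * Real.sqrt (b p.1 p.2))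
              * ((v p.1 * (u p.1 - u p.2)) * (v p.1 - v p.2)) from by ring, hb']
      have e4 : f4 p * g0 p
          = b p.1 p.2 * ((v p.2 * (u p.1 - u p.2)) * (v p.1 - v p.2)) := by
        rw [hf4, hg0]; beta_reduce
        rw [show Real.sqrt (b p.1 p.2) * (v p.2 * (u p.1 - u p.2))
            * (Real.sqrt (b p.1 p.2) * (v p.1 - v p.2))
            = (Real.sqrt (b p.1 p.2) * Real.sqrt (b p.1 p.2))
              * ((v p.2 * (u p.1 - u p.2)) * (v p.1 - v p.2)) from by ring, hb']
      rw [e3, e4]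
      rw [abs_mul (b p.1 p.2), abs_mul (b p.1 p.2), abs_mul (b p.1 p.2)]
      simp only [abs_of_nonneg (hb_nonneg p.1 p.2)]
      have hmain : |(u p.1 - u p.2) * (u p.2 * (v p.1 ^ 2 - v p.2 ^ 2))|
          ≤ |(v p.1 * (u p.1 - u p.2)) * (v p.1 - v p.2)|
            + |(v p.2 * (u p.1 - u p.2)) * (v p.1 - v p.2)| := by
        have h1 : (u p.1 - u p.2) * (u p.2 * (v p.1 ^ 2 - v p.2 ^ 2))
            = u p.2 * ((v p.1 * (u p.1 - u p.2)) * (v p.1 - v p.2))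
              + u p.2 * ((v p.2 * (u p.1 - u p.2)) * (v p.1 - v p.2)) := by ring
        rw [h1]
        calc |u p.2 * ((v p.1 * (u p.1 - u p.2)) * (v p.1 - v p.2))
              + u p.2 * ((v p.2 * (u p.1 - u p.2)) * (v p.1 - v p.2))|
            ≤ |u p.2 * ((v p.1 * (u p.1 - u p.2)) * (v p.1 - v p.2))|
              + |u p.2 * ((v p.2 * (u p.1 - u p.2)) * (v p.1 - v p.2))| := abs_add_le _ _
          _ ≤ |(v p.1 * (u p.1 - u p.2)) * (v p.1 - v p.2)|
              + |(v p.2 * (u p.1 - u p.2)) * (v p.1 - v p.2)| := by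
            refine add_le_add ?_ ?_ <;>
              · rw [abs_mul]
                exact mul_le_of_le_one_left (abs_nonneg _) (hub p.2)
      calc b p.1 p.2 * |(u p.1 - u p.2) * (u p.2 * (v p.1 ^ 2 - v p.2 ^ 2))|
          ≤ b p.1 p.2 * (|(v p.1 * (u p.1 - u p.2)) * (v p.1 - v p.2)|
            + |(v p.2 * (u p.1 - u p.2)) * (v p.1 - v p.2)|) :=
            mul_le_mul_of_nonneg_left hmain (hb_nonneg _ _)
        _ = b p.1 p.2 * |(v p.1 * (u p.1 - u p.2)) * (v p.1 - v p.2)|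
            + b p.1 p.2 * |(v p.2 * (u p.1 - u p.2)) * (v p.1 - v p.2)| := mul_add _ _ _
    have hab3 : Summable fun p => |f3 p * g0 p| := shnol_summable_absmul f3 g0 hSf3 hSg0
    have hab4 : Summable fun p => |f4 p * g0 p| := shnol_summable_absmul f4 g0 hSf4 hSg0
    have hRabs : Summable fun p : X × X =>
        |b p.1 p.2 * ((u p.1 - u p.2) * (u p.2 * (v p.1 ^ 2 - v p.2 ^ 2)))| := hSR.abs
    calc |R| ≤ ∑' p : X × X, |b p.1 p.2 * ((u p.1 - u p.2) * (u p.2 * (v p.1 ^ 2 - v p.2 ^ 2)))| := by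
          have h := norm_tsum_le_tsum_norm
            (f := fun p : X × X => b p.1 p.2 * ((u p.1 - u p.2) * (u p.2 * (v p.1 ^ 2 - v p.2 ^ 2))))
            (by simpa only [Real.norm_eq_abs] using hRabs)
          simpa only [Real.norm_eq_abs] using h
      _ ≤ ∑' p : X × X, (|f3 p * g0 p| + |f4 p * g0 p|) :=
          Summable.tsum_le_tsum key hRabs (hab3.add hab4)
      _ = (∑' p, |f3 p * g0 p|) + ∑' p, |f4 p * g0 p| := Summable.tsum_add hab3 hab4
      _ = (∑' p, |f3 p| * |g0 p|) + ∑' p, |f4 p| * |g0 p| := by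
          rw [tsum_congr fun p => abs_mul (f3 p) (g0 p),
            tsum_congr fun p => abs_mul (f4 p) (g0 p)]
      _ ≤ Real.sqrt (∑' p, f3 p ^ 2) * Real.sqrt (∑' p, g0 p ^ 2)
          + Real.sqrt (∑' p, f4 p ^ 2) * Real.sqrt (∑' p, g0 p ^ 2) :=
          add_le_add (shnol_cs_tsum f3 g0 hSf3 hSg0) (shnol_cs_tsum f4 g0 hSf4 hSg0)
      _ = Real.sqrt S * Real.sqrt Qv + Real.sqrt S * Real.sqrt Qv := by
          rw [hf3S, hf4S, hg0Qv]
      _ ≤ Real.sqrt S * 1 + Real.sqrt S * 1 :=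
          add_le_add (mul_le_mul_of_nonneg_left hsqQv (Real.sqrt_nonneg _))
            (mul_le_mul_of_nonneg_left hsqQv (Real.sqrt_nonneg _))
      _ = 2 * Real.sqrt S := by ring
  -- Caccioppoli inequality for S
  have hSineq : S ≤ (|lam| + M) + 2 * Real.sqrt S := by
    have hid : S = lam * (∑' x, u x * (v x ^ 2 * u x) * m x)
        - (∑' x, W x * u x * (v x ^ 2 * u x) * m x) - R := by
      rw [hCsplit] at hEig2; linarith
    have h1 : lam * (∑' x, u x * (v x ^ 2 * u x) * m x) ≤ |lam| := by
      calc lam * (∑' x, u x * (v x ^ 2 * u x) * m x)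
          ≤ |lam * (∑' x, u x * (v x ^ 2 * u x) * m x)| := le_abs_self _
        _ = |lam| * |∑' x, u x * (v x ^ 2 * u x) * m x| := abs_mul _ _
        _ ≤ |lam| * 1 := mul_le_mul_of_nonneg_left hA2bd (abs_nonneg _)
        _ = |lam| := mul_one _
    linarith [neg_abs_le (∑' x, W x * u x * (v x ^ 2 * u x) * m x), neg_abs_le R, hB2bd, hRbd]
  have hsqS : Real.sqrt S ≤ 1 + Real.sqrt (1 + |lam| + M) := by
    have h := shnol_sqrt_quad hS0 hSineq
    have : Real.sqrt (1 + (|lam| + M)) = Real.sqrt (1 + |lam| + M) := by ring_nf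
    linarith [h, this.le, this.ge]
  -- assemble
  have hQφ_goal : (∑' x, ∑' y, b x y * (φ x - φ y) ^ 2) = Qφ := dbl _ hSQφ
  have e1 : (∑' x, ∑' y, b x y * (w x - w y) * (v x - v y))
      = N⁻¹ * ∑' p : X × X,
          b p.1 p.2 * ((φ p.1 * u p.1 - φ p.2 * u p.2) * (v p.1 - v p.2)) := by
    calc (∑' x, ∑' y, b x y * (w x - w y) * (v x - v y))
        = ∑' x, ∑' y, (fun p : X × X => N⁻¹ * (b p.1 p.2
            * ((φ p.1 * u p.1 - φ p.2 * u p.2) * (v p.1 - v p.2)))) (x, y) := by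
          refine tsum_congr fun x => tsum_congr fun y => ?_
          beta_reduce
          rw [hwx x, hwx y]
          field_simp
      _ = ∑' p : X × X, N⁻¹ * (b p.1 p.2
            * ((φ p.1 * u p.1 - φ p.2 * u p.2) * (v p.1 - v p.2))) :=
          dbl _ (hSP1.mul_left N⁻¹)
      _ = N⁻¹ * ∑' p : X × X, b p.1 p.2
            * ((φ p.1 * u p.1 - φ p.2 * u p.2) * (v p.1 - v p.2)) := tsum_mul_left
  have e2 : (∑' x, W x * w x * v x * m x) = N⁻¹ * ∑' x, W x * (φ x * u x) * v x * m x := by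
    rw [← tsum_mul_left]
    refine tsum_congr fun x => ?_
    rw [hwx x]
    field_simp
  have e3 : (∑' x, w x * v x * m x) = N⁻¹ * ∑' x, (φ x * u x) * v x * m x := by
    rw [← tsum_mul_left]
    refine tsum_congr fun x => ?_
    rw [hwx x]
    field_simp
  rw [e1, e2, e3, hQφ_goal]
  have hfold : N⁻¹ * (∑' p : X × X, b p.1 p.2
        * ((φ p.1 * u p.1 - φ p.2 * u p.2) * (v p.1 - v p.2)))
      + N⁻¹ * (∑' x, W x * (φ x * u x) * v x * m x)
      - lam * (N⁻¹ * ∑' x, (φ x * u x) * v x * m x)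
      = N⁻¹ * ((∑' p : X × X, b p.1 p.2
        * ((φ p.1 * u p.1 - φ p.2 * u p.2) * (v p.1 - v p.2)))
        + (∑' x, W x * (φ x * u x) * v x * m x)
        - lam * (∑' x, (φ x * u x) * v x * m x)) := by ring
  rw [hfold, abs_mul, abs_of_nonneg hNinv0]
  have hend : |(∑' p : X × X, b p.1 p.2
      * ((φ p.1 * u p.1 - φ p.2 * u p.2) * (v p.1 - v p.2)))
      + (∑' x, W x * (φ x * u x) * v x * m x)
      - lam * (∑' x, (φ x * u x) * v x * m x)|
      ≤ (2 + Real.sqrt (1 + |lam| + M)) * Real.sqrt Qφ := by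
    rw [hD]
    calc |T1 + T2| ≤ |T1| + |T2| := abs_add_le _ _
      _ ≤ Real.sqrt Qφ * Real.sqrt Qv + Real.sqrt Qφ * Real.sqrt S := add_le_add hT1bd hT2bd
      _ ≤ Real.sqrt Qφ * 1 + Real.sqrt Qφ * (1 + Real.sqrt (1 + |lam| + M)) := by
          refine add_le_add ?_ ?_
          · exact mul_le_mul_of_nonneg_left hsqQv (Real.sqrt_nonneg _)
          · exact mul_le_mul_of_nonneg_left hsqS (Real.sqrt_nonneg _)
      _ = (2 + Real.sqrt (1 + |lam| + M)) * Real.sqrt Qφ := by ring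
  calc N⁻¹ * |(∑' p : X × X, b p.1 p.2
      * ((φ p.1 * u p.1 - φ p.2 * u p.2) * (v p.1 - v p.2)))
      + (∑' x, W x * (φ x * u x) * v x * m x)
      - lam * (∑' x, (φ x * u x) * v x * m x)|
      ≤ 1 * |(∑' p : X × X, b p.1 p.2
      * ((φ p.1 * u p.1 - φ p.2 * u p.2) * (v p.1 - v p.2)))
      + (∑' x, W x * (φ x * u x) * v x * m x)
      - lam * (∑' x, (φ x * u x) * v x * m x)| :=
        mul_le_mul_of_nonneg_right hNinv1 (abs_nonneg _)
    _ = _ := one_mul _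
    _ ≤ (2 + Real.sqrt (1 + |lam| + M)) * Real.sqrt Qφ := hend
end
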